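/- arXiv:1912.02064 — 5 statements merged into one kernel-verified Lean document; each statement's English description precedes it below -/
import Mathlib

section
/- Let γ, η ∈ (0,1), ρ ≥ 0 and 0 ≤ s ≤ u < t ≤ τ. Then ∫_u^t (τ−a)^{−γ}(a−u)^{−η}(a−s)^{ρ} da ≤ B(1−γ, 1−η) · (τ−u)^{−γ}(t−u)^{1−η}(t−s)^{ρ}. -/
open MeasureTheory Set intervalIntegral


/-!
STATEMENT 2: for `γ, η ∈ (0,1)`, `ρ ≥ 0` and `0 ≤ s ≤ u < t ≤ τ`,
`∫_u^t (τ-a)^(-γ) (a-u)^(-η) (a-s)^ρ da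
   ≤ B(1-γ,1-η) * (τ-u)^(-γ) * (t-u)^(1-η) * (t-s)^ρ`.
-/

/-- The Euler Beta function. -/
noncomputable def eulerBeta (x y : ℝ) : ℝ :=
  Real.Gamma x * Real.Gamma y / Real.Gamma (x + y)

lemma betaReal_intervalIntegrable {x y : ℝ} (hx : 0 < x) (hy : 0 < y) :
    IntervalIntegrable (fun θ : ℝ => θ ^ (x - 1) * (1 - θ) ^ (y - 1)) volume 0 1 := by
  have hc : IntervalIntegrable (fun θ : ℝ => (θ : ℂ) ^ ((x : ℂ) - 1) * (1 - (θ : ℂ)) ^ ((y : ℂ) - 1))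
      volume 0 1 := Complex.betaIntegral_convergent (by simpa using hx) (by simpa using hy)
  have heq : EqOn (fun θ : ℝ => (θ : ℂ) ^ ((x : ℂ) - 1) * (1 - (θ : ℂ)) ^ ((y : ℂ) - 1))
      (fun θ : ℝ => ((θ ^ (x - 1) * (1 - θ) ^ (y - 1) : ℝ) : ℂ)) (uIcc 0 1) := by
    intro θ hθ
    rw [uIcc_of_le (by norm_num)] at hθ
    have h0 : (0:ℝ) ≤ θ := hθ.1
    have h1 : (0:ℝ) ≤ 1 - θ := by linarith [hθ.2]
    show (θ : ℂ) ^ ((x : ℂ) - 1) * (1 - (θ : ℂ)) ^ ((y : ℂ) - 1)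
        = ((θ ^ (x - 1) * (1 - θ) ^ (y - 1) : ℝ) : ℂ)
    rw [show ((x:ℂ) - 1) = ((x - 1 : ℝ) : ℂ) by push_cast; ring,
      show ((y:ℂ) - 1) = ((y - 1 : ℝ) : ℂ) by push_cast; ring,
      show (1 - (θ:ℂ)) = ((1 - θ : ℝ) : ℂ) by push_cast; ring,
      ← Complex.ofReal_cpow h0, ← Complex.ofReal_cpow h1, ← Complex.ofReal_mul]
  rw [intervalIntegrable_iff] at hc ⊢
  have hc2 : IntegrableOn (fun θ : ℝ => ((θ ^ (x - 1) * (1 - θ) ^ (y - 1) : ℝ) : ℂ))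
      (uIoc (0:ℝ) 1) volume := hc.congr_fun (fun a ha => heq (uIoc_subset_uIcc ha)) measurableSet_uIoc
  simpa [IntegrableOn] using hc2.re

lemma betaReal_eq {x y : ℝ} (hx : 0 < x) (hy : 0 < y) :
    (∫ θ in (0:ℝ)..1, θ ^ (x - 1) * (1 - θ) ^ (y - 1)) = eulerBeta x y := by
  have heq : EqOn (fun θ : ℝ => (θ : ℂ) ^ ((x : ℂ) - 1) * (1 - (θ : ℂ)) ^ ((y : ℂ) - 1))
      (fun θ : ℝ => ((θ ^ (x - 1) * (1 - θ) ^ (y - 1) : ℝ) : ℂ)) (uIcc 0 1) := by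
    intro θ hθ
    rw [uIcc_of_le (by norm_num)] at hθ
    have h0 : (0:ℝ) ≤ θ := hθ.1
    have h1 : (0:ℝ) ≤ 1 - θ := by linarith [hθ.2]
    show (θ : ℂ) ^ ((x : ℂ) - 1) * (1 - (θ : ℂ)) ^ ((y : ℂ) - 1)
        = ((θ ^ (x - 1) * (1 - θ) ^ (y - 1) : ℝ) : ℂ)
    rw [show ((x:ℂ) - 1) = ((x - 1 : ℝ) : ℂ) by push_cast; ring,
      show ((y:ℂ) - 1) = ((y - 1 : ℝ) : ℂ) by push_cast; ring,
      show (1 - (θ:ℂ)) = ((1 - θ : ℝ) : ℂ) by push_cast; ring,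
      ← Complex.ofReal_cpow h0, ← Complex.ofReal_cpow h1, ← Complex.ofReal_mul]
  have hB : Complex.betaIntegral x y = ((∫ θ in (0:ℝ)..1, θ ^ (x - 1) * (1 - θ) ^ (y - 1) : ℝ) : ℂ) := by
    rw [Complex.betaIntegral, intervalIntegral.integral_congr heq]
    exact intervalIntegral.integral_ofReal
  have hG := Complex.Gamma_mul_Gamma_eq_betaIntegral (s := (x:ℂ)) (t := (y:ℂ))
    (by simpa using hx) (by simpa using hy)
  rw [hB] at hG
  have hxy : ((x:ℂ) + y) = ((x + y : ℝ) : ℂ) := by push_cast; ring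
  rw [hxy, Complex.Gamma_ofReal, Complex.Gamma_ofReal, Complex.Gamma_ofReal,
    ← Complex.ofReal_mul, ← Complex.ofReal_mul, Complex.ofReal_inj] at hG
  have hne : Real.Gamma (x + y) ≠ 0 := (Real.Gamma_pos_of_pos (by linarith)).ne'
  rw [eulerBeta, hG, mul_div_cancel_left₀ _ hne]

lemma shifted_beta_integrable {x y u t : ℝ} (hx : 0 < x) (hy : 0 < y) (hut : u < t) :
    IntervalIntegrable (fun a : ℝ => (a - u) ^ (x - 1) * (t - a) ^ (y - 1)) volume u t := by
  set c := t - u with hcdef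
  have hc : 0 < c := by simp [hcdef]; linarith
  have hG := betaReal_intervalIntegrable hx hy
  have h1 := (hG.comp_mul_right (c := c⁻¹) enorm_ne_top enorm_ne_top).comp_sub_right u
  have he0 : (0:ℝ) / c⁻¹ + u = u := by simp
  have he1 : (1:ℝ) / c⁻¹ + u = t := by rw [one_div, inv_inv, hcdef]; ring
  rw [he0, he1] at h1
  have h2 := h1.const_mul (c ^ (x - 1) * c ^ (y - 1))
  rw [intervalIntegrable_iff] at h2 ⊢
  refine h2.congr_fun (fun a ha => ?_) measurableSet_uIoc
  rw [uIoc_of_le hut.le] at ha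
  have hau : 0 ≤ a - u := by linarith [ha.1]
  have hta : 0 ≤ t - a := by linarith [ha.2]
  have h3 : 1 - (a - u) * c⁻¹ = (t - a) * c⁻¹ := by field_simp; ring
  dsimp only
  rw [h3, Real.mul_rpow hau (by positivity), Real.mul_rpow hta (by positivity),
    Real.inv_rpow hc.le, Real.inv_rpow hc.le]
  field_simp

lemma shifted_beta_eq {x y u t : ℝ} (hx : 0 < x) (hy : 0 < y) (hut : u < t) :
    (∫ a in u..t, (a - u) ^ (x - 1) * (t - a) ^ (y - 1))
      = (t - u) ^ (x + y - 1) * eulerBeta x y := by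
  set c := t - u with hcdef
  have hc : 0 < c := by simp [hcdef]; linarith
  have key := intervalIntegral.smul_integral_comp_mul_add
    (a := (0:ℝ)) (b := 1) (fun a : ℝ => (a - u) ^ (x - 1) * (t - a) ^ (y - 1)) c u
  have he0 : c * 0 + u = u := by ring
  have he1 : c * 1 + u = t := by simp [hcdef]
  rw [he0, he1] at key
  have hcongr : EqOn (fun θ : ℝ => (c * θ + u - u) ^ (x - 1) * (t - (c * θ + u)) ^ (y - 1))
      (fun θ : ℝ => (c ^ (x - 1) * c ^ (y - 1)) * (θ ^ (x - 1) * (1 - θ) ^ (y - 1)))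
      (uIcc 0 1) := by
    intro θ hθ
    rw [uIcc_of_le (by norm_num)] at hθ
    have h0 : (0:ℝ) ≤ θ := hθ.1
    have h1 : (0:ℝ) ≤ 1 - θ := by linarith [hθ.2]
    have h2 : c * θ + u - u = c * θ := by ring
    have h3 : t - (c * θ + u) = c * (1 - θ) := by simp [hcdef]; ring
    simp only [h2, h3, Real.mul_rpow hc.le h0, Real.mul_rpow hc.le h1]
    ring
  rw [← key, intervalIntegral.integral_congr hcongr, intervalIntegral.integral_const_mul,
    betaReal_eq hx hy, smul_eq_mul]
  rw [show c ^ (x - 1) * c ^ (y - 1) = c ^ ((x - 1) + (y - 1)) from (Real.rpow_add hc _ _).symm,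
    show c * (c ^ ((x - 1) + (y - 1)) * eulerBeta x y)
       = (c ^ (1:ℝ) * c ^ ((x - 1) + (y - 1))) * eulerBeta x y by rw [Real.rpow_one]; ring,
    ← Real.rpow_add hc]
  ring_nf

theorem statement2 (γ η ρ s u t τ : ℝ) (hγ0 : 0 < γ) (hγ1 : γ < 1)
    (hη0 : 0 < η) (hη1 : η < 1) (hρ : 0 ≤ ρ)
    (hs : 0 ≤ s) (hsu : s ≤ u) (hut : u < t) (htτ : t ≤ τ) :
    (∫ a in u..t, (τ - a) ^ (-γ) * (a - u) ^ (-η) * (a - s) ^ ρ) ≤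
      eulerBeta (1 - γ) (1 - η) *
        ((τ - u) ^ (-γ) * (t - u) ^ (1 - η) * (t - s) ^ ρ) := by
  have hx : 0 < 1 - η := by linarith
  have hy : 0 < 1 - γ := by linarith
  have hex : (1 - η) - 1 = -η := by ring
  have hey : (1 - γ) - 1 = -γ := by ring
  have htu : 0 < t - u := by linarith
  have hτu : 0 < τ - u := by linarith
  set C1 : ℝ := (τ - u) ^ (-γ) * (t - u) ^ γ * (t - s) ^ ρ with hC1
  -- the dominating function
  set g : ℝ → ℝ := fun a => C1 * ((a - u) ^ (-η) * (t - a) ^ (-γ)) with hg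
  have hFint : IntervalIntegrable (fun a : ℝ => (a - u) ^ (-η) * (t - a) ^ (-γ)) volume u t := by
    have := shifted_beta_integrable hx hy hut
    simpa only [hex, hey] using this
  have hFeq : (∫ a in u..t, (a - u) ^ (-η) * (t - a) ^ (-γ))
      = (t - u) ^ ((1 - η) + (1 - γ) - 1) * eulerBeta (1 - η) (1 - γ) := by
    have := shifted_beta_eq hx hy hut
    simpa only [hex, hey] using this
  have hgint : IntegrableOn g (Ioo u t) volume := by
    have h1 : IntegrableOn (fun a : ℝ => (a - u) ^ (-η) * (t - a) ^ (-γ)) (Ioc u t) volume :=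
      (intervalIntegrable_iff_integrableOn_Ioc_of_le hut.le).mp hFint
    exact ((h1.mono_set Ioo_subset_Ioc_self).const_mul C1)
  have hbound : ∀ a ∈ Ioo u t,
      (τ - a) ^ (-γ) * (a - u) ^ (-η) * (a - s) ^ ρ ≤ g a := by
    intro a ha
    have h1 : 0 < a - u := by linarith [ha.1]
    have h2 : 0 < t - a := by linarith [ha.2]
    have h4 : 0 < τ - a := by linarith [ha.2]
    have hsa : 0 < a - s := by linarith [ha.1]
    have hP : 0 < (τ - u) * (t - a) / (t - u) := by positivity
    have hPle : (τ - u) * (t - a) / (t - u) ≤ τ - a := by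
      rw [div_le_iff₀ htu]
      nlinarith [mul_nonneg (sub_nonneg.2 htτ) h1.le]
    have hA : (τ - a) ^ (-γ) ≤ (τ - u) ^ (-γ) * (t - u) ^ γ * (t - a) ^ (-γ) := by
      calc (τ - a) ^ (-γ) ≤ ((τ - u) * (t - a) / (t - u)) ^ (-γ) :=
            Real.rpow_le_rpow_of_nonpos hP hPle (neg_nonpos.2 hγ0.le)
        _ = (τ - u) ^ (-γ) * (t - u) ^ γ * (t - a) ^ (-γ) := by
            rw [Real.div_rpow (by positivity) htu.le,
              Real.mul_rpow hτu.le h2.le, Real.rpow_neg htu.le, div_inv_eq_mul]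
            ring
    have hC : (a - s) ^ ρ ≤ (t - s) ^ ρ :=
      Real.rpow_le_rpow hsa.le (by linarith [ha.2]) hρ
    calc (τ - a) ^ (-γ) * (a - u) ^ (-η) * (a - s) ^ ρ
        ≤ ((τ - u) ^ (-γ) * (t - u) ^ γ * (t - a) ^ (-γ)) * (a - u) ^ (-η) * (t - s) ^ ρ := by
          refine mul_le_mul (mul_le_mul hA le_rfl (Real.rpow_nonneg h1.le _) (by positivity))
            hC (Real.rpow_nonneg hsa.le _) (by positivity)
      _ = g a := by rw [hg, hC1]; ring
  have hf0 : ∀ a ∈ Ioo u t, 0 ≤ (τ - a) ^ (-γ) * (a - u) ^ (-η) * (a - s) ^ ρ := by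
    intro a ha
    have h1 : 0 < a - u := by linarith [ha.1]
    have h2 : 0 ≤ τ - a := by linarith [ha.2]
    have hsa : 0 < a - s := by linarith [ha.1]
    positivity
  rw [intervalIntegral.integral_of_le hut.le, integral_Ioc_eq_integral_Ioo]
  have step1 : (∫ a in Ioo u t, (τ - a) ^ (-γ) * (a - u) ^ (-η) * (a - s) ^ ρ)
      ≤ ∫ a in Ioo u t, g a := by
    refine integral_mono_of_nonneg ?_ hgint ?_
    · rw [Filter.EventuallyLE, ae_restrict_iff' measurableSet_Ioo]
      exact Filter.Eventually.of_forall (fun a ha => hf0 a ha)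
    · rw [Filter.EventuallyLE, ae_restrict_iff' measurableSet_Ioo]
      exact Filter.Eventually.of_forall (fun a ha => hbound a ha)
  refine step1.trans (le_of_eq ?_)
  have hswap : eulerBeta (1 - η) (1 - γ) = eulerBeta (1 - γ) (1 - η) := by
    rw [eulerBeta, eulerBeta, mul_comm (Real.Gamma (1 - η)), add_comm (1 - η)]
  calc (∫ a in Ioo u t, g a)
      = C1 * ∫ a in Ioo u t, (a - u) ^ (-η) * (t - a) ^ (-γ) := by
        rw [hg, MeasureTheory.integral_const_mul]
    _ = C1 * ((t - u) ^ ((1 - η) + (1 - γ) - 1) * eulerBeta (1 - γ) (1 - η)) := by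
        rw [← integral_Ioc_eq_integral_Ioo, ← intervalIntegral.integral_of_le hut.le,
          hFeq, hswap]
    _ = eulerBeta (1 - γ) (1 - η) *
          ((τ - u) ^ (-γ) * ((t - u) ^ γ * (t - u) ^ ((1 - η) + (1 - γ) - 1)) * (t - s) ^ ρ) := by
        rw [hC1]; ring
    _ = eulerBeta (1 - γ) (1 - η) * ((τ - u) ^ (-γ) * (t - u) ^ (1 - η) * (t - s) ^ ρ) := by
        rw [← Real.rpow_add htu]; ring_nf
end

section
/- Let E be a real Banach space, T > 0, γ ∈ (0,1), and let k(t,s) be defined and measurable for 0 ≤ s < t ≤ T with |k(t,s)| ≤ c_k (t−s)^{−γ}. Let x : [0,T] → E be continuously differentiable with ‖x‖_{C¹} = sup_{t∈[0,T]} (‖x_t‖ + ‖ẋ_t‖). For n ≥ 1 and 0 ≤ s < t ≤ τ ≤ T define the n-th iterated Volterra integral z^{n,τ}_{ts} = ∫_{s<r_1<⋯<r_n<t} k(τ,r_n) ∏_{j=1}^{n−1} k(r_{j+1},r_j) · ẋ_{r_1} ⊗ ⋯ ⊗ ẋ_{r_n} dr_1⋯dr_n, a Bochner integral with values in the n-fold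 projective tensor power of E. Then ‖z^{n,τ}_{ts}‖ ≤ (c_k ‖x‖_{C¹} Γ(1−γ))^{n} / Γ(n(1−γ)+1) · (τ−s)^{−γ}(t−s)^{(n−1)(1−γ)+1}. -/
/-!
STATEMENT 3 (Proposition 3.3 of the paper): Gamma-decay bound for the
`n`-th iterated Volterra integral of a `C¹` path.  The `n`-fold projective
tensor power of `E` is abstracted as a Banach space `G` together with a
continuous multilinear map `ι` satisfying the cross-norm inequality
`‖ι v‖ ≤ ∏ ‖v i‖` (which the projective tensor power satisfies).
The statement is given for `n + 1` with `n : ℕ`, i.e. for all orders `≥ 1`.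
-/

open MeasureTheory Set

/-- The open simplex `{s < r_0 < r_1 < ⋯ < r_n < t}`. -/
def simplexSet (n : ℕ) (a b : ℝ) : Set (Fin (n + 1) → ℝ) :=
  {r | StrictMono r ∧ ∀ i, r i ∈ Set.Ioo a b}


lemma cpow_ofReal_eq {x y : ℝ} (hx : 0 ≤ x) :
    (x : ℂ) ^ ((y : ℂ) - 1) = ((x ^ (y - 1) : ℝ) : ℂ) := by
  rw [← Complex.ofReal_one, ← Complex.ofReal_sub, ← Complex.ofReal_cpow hx]

lemma betaReal01_integrable {p q : ℝ} (hp : 0 < p) (hq : 0 < q) :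
    IntegrableOn (fun x : ℝ => x ^ (p - 1) * (1 - x) ^ (q - 1)) (Ioc 0 1) := by
  have h := Complex.betaIntegral_convergent (u := (p : ℂ)) (v := (q : ℂ)) (by simpa) (by simpa)
  have h1 : IntegrableOn (fun x : ℝ => (x : ℂ) ^ ((p:ℂ) - 1) * (1 - x) ^ ((q:ℂ) - 1))
      (Ioc (0:ℝ) 1) := (intervalIntegrable_iff_integrableOn_Ioc_of_le (by norm_num)).mp h
  have h2 := h1.re
  refine h2.congr ((ae_restrict_iff' measurableSet_Ioc).2 (Filter.Eventually.of_forall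
    fun x hx => ?_))
  show RCLike.re ((x:ℂ) ^ ((p:ℂ) - 1) * (1 - (x:ℂ)) ^ ((q:ℂ) - 1)) = x ^ (p - 1) * (1 - x) ^ (q - 1)
  rw [cpow_ofReal_eq hx.1.le, show ((1:ℂ) - (x:ℝ)) = (((1 - x : ℝ)):ℂ) by push_cast; ring,
    cpow_ofReal_eq (by linarith [hx.2])]
  simp [← Complex.ofReal_mul]

lemma betaReal01 {p q : ℝ} (hp : 0 < p) (hq : 0 < q) :
    ∫ x in (0:ℝ)..1, x ^ (p - 1) * (1 - x) ^ (q - 1)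
      = Real.Gamma p * Real.Gamma q / Real.Gamma (p + q) := by
  have h := Complex.Gamma_mul_Gamma_eq_betaIntegral (s := (p : ℂ)) (t := (q : ℂ))
    (by simpa) (by simpa)
  have key : Complex.betaIntegral p q
      = ((∫ x in (0:ℝ)..1, x ^ (p - 1) * (1 - x) ^ (q - 1) : ℝ) : ℂ) := by
    rw [Complex.betaIntegral, ← intervalIntegral.integral_ofReal]
    refine intervalIntegral.integral_congr fun x hx => ?_
    rw [Set.uIcc_of_le (by norm_num)] at hx
    rw [cpow_ofReal_eq hx.1, show ((1:ℂ) - (x:ℝ)) = (((1 - x : ℝ)):ℂ) by push_cast; ring,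
      cpow_ofReal_eq (by linarith [hx.2])]
    simp [← Complex.ofReal_mul]
  rw [key] at h
  have hΓ : (Real.Gamma (p + q)) ≠ 0 := ne_of_gt (Real.Gamma_pos_of_pos (by linarith))
  rw [← Complex.ofReal_add, Complex.Gamma_ofReal, Complex.Gamma_ofReal,
    Complex.Gamma_ofReal, ← Complex.ofReal_mul, ← Complex.ofReal_mul] at h
  have h' := Complex.ofReal_injective h
  field_simp
  linarith [h']

lemma betaIoo_integrable {p q a b : ℝ} (hp : 0 < p) (hq : 0 < q) (hab : a < b) :
    IntegrableOn (fun u : ℝ => (u - a) ^ (p - 1) * (b - u) ^ (q - 1)) (Ioc a b) := by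
  set c := b - a with hc
  have hc0 : 0 < c := by simp [hc]; linarith
  have hF : IntervalIntegrable (fun x : ℝ => x ^ (p - 1) * (1 - x) ^ (q - 1)) volume 0 1 :=
    (intervalIntegrable_iff_integrableOn_Ioc_of_le (by norm_num)).mpr (betaReal01_integrable hp hq)
  have h1 := hF.comp_mul_left (c := c⁻¹)
  have h2 := h1.comp_add_right (-a)
  have h3 : IntervalIntegrable (fun u : ℝ => ((u - a)/c) ^ (p-1) * (1 - (u - a)/c) ^ (q-1))
      volume a b := by
    have e1 : (0:ℝ) / c⁻¹ - -a = a := by simp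
    have e2 : (1:ℝ) / c⁻¹ - -a = b := by field_simp [hc]; linarith
    rw [e1, e2] at h2
    refine IntervalIntegrable.congr (fun u _ => ?_) h2
    simp only [div_eq_inv_mul]
    ring_nf
  have h4 := (intervalIntegrable_iff_integrableOn_Ioc_of_le hab.le).mp h3
  have h5 := h4.const_mul (c ^ (p - 1) * c ^ (q - 1))
  refine h5.congr ((ae_restrict_iff' measurableSet_Ioc).2 (Filter.Eventually.of_forall
    fun u hu => ?_))
  show c ^ (p-1) * c ^ (q-1) * (((u - a)/c) ^ (p-1) * (1 - (u - a)/c) ^ (q-1))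
      = (u - a) ^ (p - 1) * (b - u) ^ (q - 1)
  have h6 : 1 - (u - a)/c = (b - u)/c := by field_simp [hc]; linarith
  rw [h6, Real.div_rpow (by linarith [hu.1]) hc0.le, Real.div_rpow (by linarith [hu.2]) hc0.le]
  field_simp

lemma betaIoo_value {p q a b : ℝ} (hp : 0 < p) (hq : 0 < q) (hab : a < b) :
    ∫ u in Ioo a b, (u - a) ^ (p - 1) * (b - u) ^ (q - 1)
      = Real.Gamma p * Real.Gamma q / Real.Gamma (p + q) * (b - a) ^ (p + q - 1) := by
  set c := b - a with hc
  have hc0 : 0 < c := by simp [hc]; linarith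
  have key : ∫ u in a..b, (u - a) ^ (p - 1) * (b - u) ^ (q - 1)
      = c ^ (p - 1) * c ^ (q - 1) * c *
        ∫ x in (0:ℝ)..1, x ^ (p - 1) * (1 - x) ^ (q - 1) := by
    have hsub := intervalIntegral.smul_integral_comp_add_mul
      (f := fun u => (u - a) ^ (p - 1) * (b - u) ^ (q - 1)) (a := (0:ℝ)) (b := 1) c a
    simp only [mul_zero, zero_add, mul_one, smul_eq_mul, add_zero] at hsub
    have e2 : a + c = b := by simp [hc]
    rw [e2] at hsub
    have hcm : ∫ x in (0:ℝ)..1, (c ^ (p-1) * c ^ (q-1)) * (x ^ (p-1) * (1 - x) ^ (q-1))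
        = (c ^ (p-1) * c ^ (q-1)) * ∫ x in (0:ℝ)..1, x ^ (p-1) * (1 - x) ^ (q-1) :=
      intervalIntegral.integral_const_mul _ _
    rw [← hsub, show c ^ (p-1) * c ^ (q-1) * c = c * (c ^ (p-1) * c ^ (q-1)) by ring,
      mul_assoc, ← hcm]
    congr 1
    refine intervalIntegral.integral_congr fun x hx => ?_
    rw [Set.uIcc_of_le (by norm_num)] at hx
    show (a + c * x - a) ^ (p-1) * (b - (a + c * x)) ^ (q-1)
        = c ^ (p-1) * c ^ (q-1) * (x ^ (p-1) * (1 - x) ^ (q-1))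
    have e3 : a + c * x - a = c * x := by ring
    have e4 : b - (a + c * x) = c * (1 - x) := by simp [hc]; ring
    rw [e3, e4, Real.mul_rpow hc0.le hx.1, Real.mul_rpow hc0.le (by linarith [hx.2])]
    ring
  have : ∫ u in Ioo a b, (u - a) ^ (p - 1) * (b - u) ^ (q - 1)
      = ∫ u in a..b, (u - a) ^ (p - 1) * (b - u) ^ (q - 1) := by
    rw [intervalIntegral.integral_of_le hab.le, MeasureTheory.integral_Ioc_eq_integral_Ioo]
  rw [this, key, betaReal01 hp hq]
  have : c ^ (p-1) * c ^ (q-1) * c = c ^ (p + q - 1) := by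
    have he : p + q - 1 = p - 1 + (q - 1) + 1 := by ring
    rw [he, Real.rpow_add hc0, Real.rpow_add hc0, Real.rpow_one]
  rw [this]; ring

lemma betaIoo_lintegral {p q a b : ℝ} (hp : 0 < p) (hq : 0 < q) (hab : a < b) :
    ∫⁻ u in Ioo a b, ENNReal.ofReal ((u - a) ^ (p - 1) * (b - u) ^ (q - 1))
      = ENNReal.ofReal
          (Real.Gamma p * Real.Gamma q / Real.Gamma (p + q) * (b - a) ^ (p + q - 1)) := by
  rw [← betaIoo_value hp hq hab,
    ← MeasureTheory.ofReal_integral_eq_lintegral_ofReal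
      (((betaIoo_integrable hp hq hab).mono_set Ioo_subset_Ioc_self))
      ((ae_restrict_iff' measurableSet_Ioo).2 (Filter.Eventually.of_forall fun u hu =>
        mul_nonneg (Real.rpow_nonneg (by linarith [hu.1]) _)
          (Real.rpow_nonneg (by linarith [hu.2]) _)))]

lemma measurableSet_simplexSet (n : ℕ) (a b : ℝ) : MeasurableSet (simplexSet n a b) := by
  have h1 : MeasurableSet {r : Fin (n+1) → ℝ | StrictMono r} := by
    have he : {r : Fin (n+1) → ℝ | StrictMono r}
        = ⋂ i : Fin n, {r | r i.castSucc < r i.succ} := by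
      ext r; simp [Fin.strictMono_iff_lt_succ, Set.mem_iInter]
    rw [he]
    exact MeasurableSet.iInter fun i =>
      measurableSet_lt (measurable_pi_apply _) (measurable_pi_apply _)
  have h2 : MeasurableSet {r : Fin (n+1) → ℝ | ∀ i, r i ∈ Set.Ioo a b} := by
    have he : {r : Fin (n+1) → ℝ | ∀ i, r i ∈ Set.Ioo a b}
        = ⋂ i, (fun r : Fin (n+1) → ℝ => r i) ⁻¹' Set.Ioo a b := by
      ext r; simp [Set.mem_iInter]
    rw [he]
    exact MeasurableSet.iInter fun i => (measurable_pi_apply i) measurableSet_Ioo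
  exact h1.inter h2

lemma snoc_mem_simplex_iff {n : ℕ} {s t : ℝ} (r' : Fin (n+1) → ℝ) (u : ℝ) :
    Fin.snoc r' u ∈ simplexSet (n+1) s t
      ↔ r' ∈ simplexSet n s t ∧ u ∈ Set.Ioo (r' (Fin.last n)) t := by
  constructor
  · rintro ⟨hmono, hmem⟩
    have hmono' : StrictMono r' := by
      intro i j hij
      have := hmono (show (i.castSucc : Fin (n+2)) < j.castSucc by simpa using hij)
      simpa [Fin.snoc_castSucc] using this
    have hlast : r' (Fin.last n) < u := by
      have := hmono (show ((Fin.last n).castSucc : Fin (n+2)) < Fin.last (n+1) by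
        simp [Fin.lt_def])
      simpa [Fin.snoc_castSucc, Fin.snoc_last] using this
    refine ⟨⟨hmono', fun i => ?_⟩, hlast, ?_⟩
    · have := hmem i.castSucc
      simpa [Fin.snoc_castSucc] using this
    · have := hmem (Fin.last (n+1))
      simpa [Fin.snoc_last] using this.2
  · rintro ⟨⟨hmono', hmem'⟩, hu⟩
    constructor
    · rw [Fin.strictMono_iff_lt_succ]
      intro i
      refine Fin.lastCases ?_ ?_ i
      · rw [Fin.succ_last]
        simpa [Fin.snoc_castSucc, Fin.snoc_last] using hu.1
      · intro j
        rw [Fin.succ_castSucc]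
        rw [Fin.snoc_castSucc, Fin.snoc_castSucc]; exact hmono' (Fin.castSucc_lt_succ (i := j))
    · intro i
      refine Fin.lastCases ?_ ?_ i
      · simpa [Fin.snoc_last] using ⟨lt_trans (hmem' (Fin.last n)).1 hu.1, hu.2⟩
      · intro j
        simpa [Fin.snoc_castSucc] using hmem' j

lemma simplex_lintegral {β : ℝ} (hβ : 0 < β) :
    ∀ (n : ℕ), ∀ c : ℝ, 0 < c → ∀ s t : ℝ, s < t →
    (∫⁻ r in simplexSet n s t,
      ENNReal.ofReal ((t - r (Fin.last n)) ^ (c - 1)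
        * ∏ j : Fin n, (r j.succ - r j.castSucc) ^ (β - 1)))
    = ENNReal.ofReal (Real.Gamma β ^ n * Real.Gamma c / Real.Gamma ((n : ℝ) * β + c + 1)
        * (t - s) ^ ((n : ℝ) * β + c)) := by
  intro n
  induction n with
  | zero =>
    intro c hc s t hst
    have mp := (volume_preserving_funUnique (Fin 1) ℝ).symm
    have hpre : (MeasurableEquiv.funUnique (Fin 1) ℝ).symm ⁻¹' (simplexSet 0 s t)
        = Set.Ioo s t := by
      ext u
      simp only [Set.mem_preimage, simplexSet, Set.mem_setOf_eq, MeasurableEquiv.funUnique,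
        Equiv.funUnique, Set.mem_Ioo]
      constructor
      · rintro ⟨-, h⟩; exact h 0
      · intro h; exact ⟨fun i j hij => absurd (Subsingleton.elim (α := Fin 1) i j) (ne_of_lt hij), fun _ => h⟩
    have key := mp.setLIntegral_comp_preimage_emb
      (MeasurableEquiv.funUnique (Fin 1) ℝ).symm.measurableEmbedding
      (fun r : Fin 1 → ℝ => ENNReal.ofReal ((t - r (Fin.last 0)) ^ (c - 1)
        * ∏ j : Fin 0, (r j.succ - r j.castSucc) ^ (β - 1))) (simplexSet 0 s t)
    erw [← key]; rw [hpre]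
    have congr1 : ∀ u : ℝ, ENNReal.ofReal
        ((t - ((MeasurableEquiv.funUnique (Fin 1) ℝ).symm u) (Fin.last 0)) ^ (c - 1)
          * ∏ j : Fin 0, (((MeasurableEquiv.funUnique (Fin 1) ℝ).symm u) j.succ
            - ((MeasurableEquiv.funUnique (Fin 1) ℝ).symm u) j.castSucc) ^ (β - 1))
        = ENNReal.ofReal ((u - s) ^ ((1:ℝ) - 1) * (t - u) ^ (c - 1)) := by
      intro u
      simp [MeasurableEquiv.funUnique, Equiv.funUnique, Real.rpow_zero]
    rw [lintegral_congr congr1, betaIoo_lintegral one_pos hc hst]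
    congr 1
    rw [Real.Gamma_one]
    push_cast
    ring_nf
  | succ n ih =>
    intro c hc s t hst
    set f : (Fin (n+2) → ℝ) → ENNReal := fun r =>
      ENNReal.ofReal ((t - r (Fin.last (n+1))) ^ (c - 1)
        * ∏ j : Fin (n+1), (r j.succ - r j.castSucc) ^ (β - 1)) with hf
    have hfm : Measurable f := by fun_prop
    have hSm := measurableSet_simplexSet (n+1) s t
    -- snoc evaluation of f
    have hsnoc : ∀ (r' : Fin (n+1) → ℝ) (u : ℝ), f (Fin.snoc r' u)
        = ENNReal.ofReal ((∏ j : Fin n, (r' j.succ - r' j.castSucc) ^ (β - 1)) *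
            ((u - r' (Fin.last n)) ^ (β - 1) * (t - u) ^ (c - 1))) := by
      intro r' u
      simp only [hf]
      congr 1
      rw [Fin.prod_univ_castSucc]
      have e1 : (Fin.snoc r' u : Fin (n+2) → ℝ) (Fin.last (n+1)) = u := Fin.snoc_last _ _
      have e2 : ∀ j : Fin n, (Fin.snoc r' u : Fin (n+2) → ℝ) (j.castSucc.succ) = r' j.succ := by
        intro j; rw [Fin.succ_castSucc]; exact Fin.snoc_castSucc _ _ _
      have e3 : ∀ j : Fin n, (Fin.snoc r' u : Fin (n+2) → ℝ) (j.castSucc.castSucc)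
          = r' j.castSucc := fun j => Fin.snoc_castSucc _ _ _
      have e4 : (Fin.snoc r' u : Fin (n+2) → ℝ) ((Fin.last n).succ) = u := by
        rw [Fin.succ_last]; exact Fin.snoc_last _ _
      have e5 : (Fin.snoc r' u : Fin (n+2) → ℝ) ((Fin.last n).castSucc) = r' (Fin.last n) :=
        Fin.snoc_castSucc _ _ _
      rw [e1, e4, e5]
      rw [Finset.prod_congr rfl (fun j _ => by rw [e2 j, e3 j])]
      ring
    -- pass to the product space
    rw [← lintegral_indicator hSm]
    have mp := (volume_preserving_piFinSuccAbove (fun _ : Fin (n+2) => ℝ) (Fin.last (n+1))).symm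
    have key := mp.lintegral_comp (f := (simplexSet (n+1) s t).indicator f) (hfm.indicator hSm)
    rw [← key, MeasureTheory.Measure.volume_eq_prod,
      lintegral_prod_symm' (fun a : ℝ × (Fin (n+1) → ℝ) =>
          (simplexSet (n+1) s t).indicator f
            ((MeasurableEquiv.piFinSuccAbove (fun _ : Fin (n+2) => ℝ) (Fin.last (n+1))).symm a))
        ((hfm.indicator hSm).comp
          (MeasurableEquiv.piFinSuccAbove (fun _ : Fin (n+2) => ℝ) (Fin.last (n+1))).symm.measurable)]
    have hsymm : ∀ (u : ℝ) (r' : Fin (n+1) → ℝ),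
        (MeasurableEquiv.piFinSuccAbove (fun _ : Fin (n+2) => ℝ) (Fin.last (n+1))).symm (u, r')
          = Fin.snoc r' u := by
      intro u r'
      rw [MeasurableEquiv.piFinSuccAbove_symm_apply]
      exact Fin.insertNth_last' u r'
    -- inner integral
    have hinner : ∀ r' : Fin (n+1) → ℝ,
        (∫⁻ u, (simplexSet (n+1) s t).indicator f (Fin.snoc r' u)) =
          (simplexSet n s t).indicator
            (fun r'' => ∫⁻ u in Set.Ioo (r'' (Fin.last n)) t, f (Fin.snoc r'' u)) r' := by
      intro r'
      by_cases hr' : r' ∈ simplexSet n s t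
      · rw [Set.indicator_of_mem hr', ← lintegral_indicator measurableSet_Ioo]
        congr 1
        ext u
        by_cases hu : u ∈ Set.Ioo (r' (Fin.last n)) t
        · rw [Set.indicator_of_mem ((snoc_mem_simplex_iff r' u).2 ⟨hr', hu⟩),
            Set.indicator_of_mem hu]
        · rw [Set.indicator_of_notMem
            (fun hmem => hu ((snoc_mem_simplex_iff r' u).1 hmem).2),
            Set.indicator_of_notMem hu]
      · rw [Set.indicator_of_notMem hr']
        have hz : ∀ u : ℝ, (simplexSet (n+1) s t).indicator f (Fin.snoc r' u) = 0 := fun u =>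
          Set.indicator_of_notMem
            (fun hmem => hr' ((snoc_mem_simplex_iff r' u).1 hmem).1) f
        simp [hz]
    calc ∫⁻ r', ∫⁻ u, (simplexSet (n+1) s t).indicator f
            ((MeasurableEquiv.piFinSuccAbove (fun _ : Fin (n+2) => ℝ)
              (Fin.last (n+1))).symm (u, r'))
        = ∫⁻ r', (simplexSet n s t).indicator
            (fun r'' => ∫⁻ u in Set.Ioo (r'' (Fin.last n)) t, f (Fin.snoc r'' u)) r' := by
          refine lintegral_congr fun r' => ?_
          rw [show (∫⁻ u, (simplexSet (n+1) s t).indicator f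
            ((MeasurableEquiv.piFinSuccAbove (fun _ : Fin (n+2) => ℝ)
              (Fin.last (n+1))).symm (u, r'))) = ∫⁻ u, (simplexSet (n+1) s t).indicator f
                (Fin.snoc r' u) from lintegral_congr fun u => by rw [hsymm]]
          exact hinner r'
      _ = ∫⁻ r' in simplexSet n s t,
            ∫⁻ u in Set.Ioo (r' (Fin.last n)) t, f (Fin.snoc r' u) :=
          lintegral_indicator (measurableSet_simplexSet n s t) _
      _ = ∫⁻ r' in simplexSet n s t,
            ENNReal.ofReal (Real.Gamma β * Real.Gamma c / Real.Gamma (β + c)) *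
            ENNReal.ofReal ((t - r' (Fin.last n)) ^ ((β + c) - 1)
              * ∏ j : Fin n, (r' j.succ - r' j.castSucc) ^ (β - 1)) := by
          refine setLIntegral_congr_fun (measurableSet_simplexSet n s t)
            (fun r' hr' => ?_)
          have ha : r' (Fin.last n) < t := (hr'.2 (Fin.last n)).2
          have hP : 0 ≤ ∏ j : Fin n, (r' j.succ - r' j.castSucc) ^ (β - 1) :=
            Finset.prod_nonneg fun j _ => Real.rpow_nonneg
              (by linarith [hr'.1 (Fin.castSucc_lt_succ (i := j))]) _
          rw [lintegral_congr fun u => by rw [hsnoc r' u]]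
          have : ∀ u : ℝ, ENNReal.ofReal
              ((∏ j : Fin n, (r' j.succ - r' j.castSucc) ^ (β - 1)) *
                ((u - r' (Fin.last n)) ^ (β - 1) * (t - u) ^ (c - 1)))
              = ENNReal.ofReal (∏ j : Fin n, (r' j.succ - r' j.castSucc) ^ (β - 1)) *
                ENNReal.ofReal ((u - r' (Fin.last n)) ^ (β - 1) * (t - u) ^ (c - 1)) :=
            fun u => ENNReal.ofReal_mul hP
          rw [lintegral_congr this, lintegral_const_mul _ (by fun_prop),
            betaIoo_lintegral hβ hc ha]
          rw [← ENNReal.ofReal_mul hP, ← ENNReal.ofReal_mul (by positivity)]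
          congr 1
          ring
      _ = ENNReal.ofReal (Real.Gamma β * Real.Gamma c / Real.Gamma (β + c)) *
            ENNReal.ofReal (Real.Gamma β ^ n * Real.Gamma (β + c)
              / Real.Gamma ((n : ℝ) * β + (β + c) + 1) * (t - s) ^ ((n : ℝ) * β + (β + c))) := by
          rw [lintegral_const_mul _ (by fun_prop), ih (β + c) (by linarith) s t hst]
      _ = ENNReal.ofReal (Real.Gamma β ^ (n+1) * Real.Gamma c
            / Real.Gamma (((n:ℕ)+1 : ℝ) * β + c + 1) * (t - s) ^ (((n:ℕ)+1 : ℝ) * β + c)) := by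
          rw [← ENNReal.ofReal_mul (by positivity)]
          congr 1
          have hΓβc : Real.Gamma (β + c) ≠ 0 :=
            (Real.Gamma_pos_of_pos (by linarith)).ne'
          rw [show ((n:ℕ)+1 : ℝ) * β + c + 1 = (n : ℝ) * β + (β + c) + 1 by push_cast; ring,
            show ((n:ℕ)+1 : ℝ) * β + c = (n : ℝ) * β + (β + c) by push_cast; ring]
          field_simp
          ring
      _ = ENNReal.ofReal (Real.Gamma β ^ (n+1) * Real.Gamma c
            / Real.Gamma ((((n:ℕ)+1 : ℕ) : ℝ) * β + c + 1)
            * (t - s) ^ ((((n:ℕ)+1 : ℕ) : ℝ) * β + c)) := by push_cast; ring_nf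

/-- The iterated Volterra integral
`∫_{a<r_0<⋯<r_n<b} k(σ,r_n) ∏_j k(r_{j+1},r_j) · ẋ_{r_0} ⊗ ⋯ ⊗ ẋ_{r_n} dr`. -/
noncomputable def volterraIter {E G : Type*} [NormedAddCommGroup E] [NormedSpace ℝ E]
    [NormedAddCommGroup G] [NormedSpace ℝ G] {n : ℕ}
    (ι : ContinuousMultilinearMap ℝ (fun _ : Fin (n + 1) => E) G)
    (k : ℝ → ℝ → ℝ) (x : ℝ → E) (a b σ : ℝ) : G :=
  ∫ r in simplexSet n a b,
    (k σ (r (Fin.last n)) * ∏ j : Fin n, k (r j.succ) (r j.castSucc)) •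
      ι (fun i => deriv x (r i))

lemma rpow_kernel_compare {γ s t τ a : ℝ} (hγ : 0 < γ) (hsa : s ≤ a) (hat : a < t)
    (htτ : t ≤ τ) : (τ - a) ^ (-γ) ≤ (τ - s) ^ (-γ) * (t - s) ^ γ * (t - a) ^ (-γ) := by
  have h1 : 0 < t - a := by linarith
  have h2 : 0 < τ - s := by linarith
  have h3 : 0 < t - s := by linarith
  have hle : (t - a) * (τ - s) / (t - s) ≤ τ - a := by
    rw [div_le_iff₀ h3]; nlinarith
  have h5 : 0 < (t - a) * (τ - s) / (t - s) := by positivity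
  calc (τ - a) ^ (-γ) ≤ ((t - a) * (τ - s) / (t - s)) ^ (-γ) :=
        Real.rpow_le_rpow_of_nonpos h5 hle (by linarith)
    _ = (τ - s) ^ (-γ) * (t - s) ^ γ * (t - a) ^ (-γ) := by
        rw [Real.div_rpow (by positivity) h3.le, Real.mul_rpow h1.le h2.le,
          Real.rpow_neg h3.le γ, div_eq_mul_inv, inv_inv]
        ring

theorem statement3 {E G : Type*} [NormedAddCommGroup E] [NormedSpace ℝ E] [CompleteSpace E]
    [NormedAddCommGroup G] [NormedSpace ℝ G] [CompleteSpace G]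
    (T γ ck : ℝ) (hT : 0 < T) (hγ0 : 0 < γ) (hγ1 : γ < 1) (hck : 0 ≤ ck)
    (k : ℝ → ℝ → ℝ) (hkm : Measurable (Function.uncurry k))
    (hk : ∀ u v : ℝ, 0 ≤ u → u < v → v ≤ T → |k v u| ≤ ck * (v - u) ^ (-γ))
    (x : ℝ → E) (hx : ContDiff ℝ 1 x)
    (n : ℕ)
    (ι : ContinuousMultilinearMap ℝ (fun _ : Fin (n + 1) => E) G)
    (hι : ∀ v, ‖ι v‖ ≤ ∏ i, ‖v i‖)
    (s t τ : ℝ) (hs : 0 ≤ s) (hst : s < t) (htτ : t ≤ τ) (hτT : τ ≤ T) :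
    ‖volterraIter ι k x s t τ‖ ≤
      (ck * (⨆ u : Set.Icc (0 : ℝ) T, (‖x u.1‖ + ‖deriv x u.1‖)) *
          Real.Gamma (1 - γ)) ^ (n + 1) /
          Real.Gamma (((n : ℝ) + 1) * (1 - γ) + 1) *
        ((τ - s) ^ (-γ) * (t - s) ^ ((n : ℝ) * (1 - γ) + 1)) := by
  have hβ : (0:ℝ) < 1 - γ := by linarith
  have hts : (0:ℝ) < t - s := by linarith
  have hτs : (0:ℝ) < τ - s := by linarith
  set M : ℝ := ⨆ u : Set.Icc (0 : ℝ) T, (‖x u.1‖ + ‖deriv x u.1‖) with hMdef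
  have hbdd : BddAbove (Set.range fun u : Set.Icc (0:ℝ) T => ‖x u.1‖ + ‖deriv x u.1‖) := by
    have hcomp : (fun u : Set.Icc (0:ℝ) T => ‖x u.1‖ + ‖deriv x u.1‖)
        = (fun v : ℝ => ‖x v‖ + ‖deriv x v‖) ∘ Subtype.val := rfl
    rw [hcomp, Set.range_comp, Subtype.range_val]
    exact (isCompact_Icc.image_of_continuousOn
      ((hx.continuous.norm.add (hx.continuous_deriv le_rfl).norm).continuousOn)).bddAbove
  have hM : ∀ u : ℝ, 0 ≤ u → u ≤ T → ‖deriv x u‖ ≤ M := by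
    intro u h0 h1
    have h2 := le_ciSup hbdd (⟨u, h0, h1⟩ : Set.Icc (0:ℝ) T)
    have h3 : (0:ℝ) ≤ ‖x u‖ := norm_nonneg _
    simp only at h2
    linarith
  have hM0 : 0 ≤ M := le_trans (norm_nonneg (deriv x 0)) (hM 0 le_rfl hT.le)
  have hΓβ : 0 < Real.Gamma (1 - γ) := Real.Gamma_pos_of_pos hβ
  have hΓd : 0 < Real.Gamma (((n:ℝ) + 1) * (1 - γ) + 1) :=
    Real.Gamma_pos_of_pos (by nlinarith [Nat.cast_nonneg (α := ℝ) n])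
  set C : ℝ := (ck * M) ^ (n+1) * ((τ - s) ^ (-γ) * (t - s) ^ γ) with hCdef
  have hC0 : 0 ≤ C := by positivity
  set core : (Fin (n+1) → ℝ) → ℝ := fun r =>
    (t - r (Fin.last n)) ^ (-γ) * ∏ j : Fin n, (r j.succ - r j.castSucc) ^ (-γ) with hcore
  -- pointwise bound
  have hpt : ∀ r ∈ simplexSet n s t,
      ‖(k τ (r (Fin.last n)) * ∏ j : Fin n, k (r j.succ) (r j.castSucc)) •
        ι (fun i => deriv x (r i))‖ ≤ C * core r := by
    rintro r ⟨hmono, hIoo⟩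
    have hpos : ∀ i, s < r i ∧ r i < t := fun i => ⟨(hIoo i).1, (hIoo i).2⟩
    have hr0 : ∀ i, (0:ℝ) ≤ r i := fun i => le_trans hs (hpos i).1.le
    have hrT : ∀ i, r i ≤ T := fun i => le_trans (hpos i).2.le (htτ.trans hτT)
    rw [norm_smul, Real.norm_eq_abs, abs_mul, Finset.abs_prod]
    have hA : |k τ (r (Fin.last n))| ≤
        ck * ((τ - s) ^ (-γ) * (t - s) ^ γ * (t - r (Fin.last n)) ^ (-γ)) := by
      refine (hk _ _ (hr0 _) ((hpos _).2.trans_le htτ) hτT).trans ?_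
      exact mul_le_mul_of_nonneg_left
        (rpow_kernel_compare hγ0 (hpos (Fin.last n)).1.le (hpos (Fin.last n)).2 htτ) hck
    have hB : ∏ j : Fin n, |k (r j.succ) (r j.castSucc)| ≤
        ∏ j : Fin n, ck * (r j.succ - r j.castSucc) ^ (-γ) := by
      refine Finset.prod_le_prod (fun j _ => abs_nonneg _) (fun j _ => ?_)
      exact hk _ _ (hr0 _) (hmono (Fin.castSucc_lt_succ (i := j))) (hrT _)
    have hD : ‖ι (fun i => deriv x (r i))‖ ≤ M ^ (n+1) := by
      refine (hι _).trans ?_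
      calc ∏ i : Fin (n+1), ‖deriv x (r i)‖ ≤ ∏ _i : Fin (n+1), M :=
            Finset.prod_le_prod (fun i _ => norm_nonneg _)
              (fun i _ => hM _ (hr0 i) (hrT i))
        _ = M ^ (n+1) := by
            rw [Finset.prod_const, Finset.card_univ, Fintype.card_fin]
    have hB' : ∏ j : Fin n, ck * (r j.succ - r j.castSucc) ^ (-γ)
        = ck ^ n * ∏ j : Fin n, (r j.succ - r j.castSucc) ^ (-γ) := by
      rw [Finset.prod_mul_distrib, Finset.prod_const, Finset.card_univ, Fintype.card_fin]
    have hprodnn : 0 ≤ ∏ j : Fin n, (r j.succ - r j.castSucc) ^ (-γ) :=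
      Finset.prod_nonneg fun j _ => Real.rpow_nonneg
        (by linarith [hmono (Fin.castSucc_lt_succ (i := j))]) _
    have habs1 : (0:ℝ) ≤ |k τ (r (Fin.last n))| := abs_nonneg _
    have habs2 : (0:ℝ) ≤ ∏ j : Fin n, |k (r j.succ) (r j.castSucc)| :=
      Finset.prod_nonneg fun j _ => abs_nonneg _
    have hι0 : (0:ℝ) ≤ ‖ι (fun i => deriv x (r i))‖ := norm_nonneg _
    have step1 : |k τ (r (Fin.last n))| * (∏ j : Fin n, |k (r j.succ) (r j.castSucc)|) *
        ‖ι (fun i => deriv x (r i))‖ ≤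
        (ck * ((τ - s) ^ (-γ) * (t - s) ^ γ * (t - r (Fin.last n)) ^ (-γ))) *
        (ck ^ n * ∏ j : Fin n, (r j.succ - r j.castSucc) ^ (-γ)) * M ^ (n+1) := by
      have hker_nn : 0 ≤ (τ - s) ^ (-γ) * (t - s) ^ γ * (t - r (Fin.last n)) ^ (-γ) :=
        mul_nonneg (mul_nonneg (Real.rpow_nonneg hτs.le _) (Real.rpow_nonneg hts.le _))
          (Real.rpow_nonneg (by linarith [(hpos (Fin.last n)).2]) _)
      refine mul_le_mul (mul_le_mul hA (hB.trans_eq hB') habs2 (mul_nonneg hck hker_nn))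
        hD hι0 (mul_nonneg (mul_nonneg hck hker_nn)
          (mul_nonneg (pow_nonneg hck n) hprodnn))
    refine step1.trans_eq ?_
    rw [hCdef, hcore]
    simp only [mul_pow]
    ring
  -- norm of integral ≤ lintegral of bound
  have hnorm := MeasureTheory.norm_integral_le_lintegral_norm
    (μ := volume.restrict (simplexSet n s t))
    (f := fun r : Fin (n+1) → ℝ =>
      (k τ (r (Fin.last n)) * ∏ j : Fin n, k (r j.succ) (r j.castSucc)) •
        ι (fun i => deriv x (r i)))
  rw [volterraIter]
  refine le_trans hnorm ?_
  have hRHSnn : 0 ≤ (ck * M * Real.Gamma (1 - γ)) ^ (n + 1) /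
      Real.Gamma (((n : ℝ) + 1) * (1 - γ) + 1) *
      ((τ - s) ^ (-γ) * (t - s) ^ ((n : ℝ) * (1 - γ) + 1)) := by positivity
  refine ENNReal.toReal_le_of_le_ofReal hRHSnn ?_
  have hmono2 : (∫⁻ r in simplexSet n s t, ENNReal.ofReal
      ‖(k τ (r (Fin.last n)) * ∏ j : Fin n, k (r j.succ) (r j.castSucc)) •
        ι (fun i => deriv x (r i))‖) ≤
      ∫⁻ r in simplexSet n s t, ENNReal.ofReal (C * core r) := by
    refine MeasureTheory.setLIntegral_mono (by fun_prop) ?_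
    exact fun r hr => ENNReal.ofReal_le_ofReal (hpt r hr)
  refine le_trans hmono2 ?_
  have heq2 : ∫⁻ r in simplexSet n s t, ENNReal.ofReal (C * core r)
      = ENNReal.ofReal C * ∫⁻ r in simplexSet n s t, ENNReal.ofReal (core r) := by
    simp_rw [ENNReal.ofReal_mul hC0]
    exact MeasureTheory.lintegral_const_mul _ (by fun_prop)
  rw [heq2]
  have hsimp := simplex_lintegral hβ n (1 - γ) hβ s t hst
  simp only [show (1:ℝ) - γ - 1 = -γ from by ring] at hsimp
  rw [hcore] at *
  rw [hsimp, ← ENNReal.ofReal_mul hC0]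
  refine ENNReal.ofReal_le_ofReal (le_of_eq ?_)
  rw [hCdef]
  have e1 : (ck * M * Real.Gamma (1 - γ)) ^ (n+1)
      = (ck * M) ^ (n+1) * Real.Gamma (1 - γ) ^ (n+1) := by rw [← mul_pow]
  have e2 : Real.Gamma (1 - γ) ^ n * Real.Gamma (1 - γ) = Real.Gamma (1 - γ) ^ (n+1) :=
    (pow_succ _ n).symm
  have e3 : (t - s) ^ γ * (t - s) ^ ((n:ℝ) * (1 - γ) + (1 - γ))
      = (t - s) ^ ((n:ℝ) * (1 - γ) + 1) := by
    rw [← Real.rpow_add hts]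
    congr 1
    ring
  have e4 : (n:ℝ) * (1 - γ) + (1 - γ) + 1 = ((n:ℝ) + 1) * (1 - γ) + 1 := by ring
  rw [e1, ← e3, e4]
  ring
end

section
/- Let E be a real Banach space, γ ∈ (0,1), and let k(t,s) be defined and measurable for 0 ≤ s < t ≤ T with |k(t,s)| ≤ c_k (t−s)^{−γ}. Let q : [0,T] → E be continuously differentiable. For m ≥ 1, 0 ≤ a < b ≤ σ ≤ T let z^{m,σ}_{ba} = ∫_{a<r_1<⋯<r_m<b} k(σ,r_m) ∏_{j=1}^{m−1} k(r_{j+1},r_j) · q̇_{r_1} ⊗ ⋯ ⊗ q̇_{r_m} dr (Bochner integral in the m-fold projective tensor power of E). Then for every n ≥ 1 and 0 ≤ s ≤ u ≤ t ≤ τ ≤ T one has the convolutional Chen relation z^{n,τ}_{ts} = Σ_{i=0}^{n} z^{n−i,τ}_{tu} ∗ z^{i,·}_{us}, where the i-th term is the integral over the product region {s < r_1 < ⋯ < r_i < u} × {u < r_{i+1} < ⋯ < r_n < t} of k(τ,r_n) ∏_{j=1}^{n−1} k(r_{j+1},r_j) · q̇_{r_1} ⊗ ⋯ ⊗ q̇_{r_n}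 (for i = 0 the region is the full simplex over [u,t], giving z^{n,τ}_{tu}, and for i = n it is the full simplex over [s,u], giving z^{n,τ}_{us}). -/
/-!
STATEMENT 4 (Proposition 3.5 of the paper): the convolutional Chen relation
for iterated Volterra integrals of a smooth path: the integral over the full
simplex `Δ_n([s,t])` decomposes into the sum over `i = 0, …, n` of the
integrals over the product regions `Δ_i([s,u]) × Δ_{n-i}([u,t])`.
The `n`-fold projective tensor power of `E` is abstracted as a Banach space
`G` with a continuous multilinear map `ι` satisfying the cross-norm bound.
The statement is given for order `n + 1`, i.e. for every order `n ≥ 1`.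
-/

open MeasureTheory

/-- The product region `Δ_i([s,u]) × Δ_{n+1-i}([u,t])`: the first `i`
variables lie in `(s,u)`, the remaining ones in `(u,t)`. -/
def splitRegion (n : ℕ) (i : ℕ) (s u t : ℝ) : Set (Fin (n + 1) → ℝ) :=
  {r | StrictMono r ∧ ∀ j : Fin (n + 1),
        ((j : ℕ) < i → r j ∈ Set.Ioo s u) ∧ (i ≤ (j : ℕ) → r j ∈ Set.Ioo u t)}

/-- The iterated Volterra integral over a region `S`. -/
noncomputable def volterraIterOn {E G : Type*} [NormedAddCommGroup E] [NormedSpace ℝ E]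
    [NormedAddCommGroup G] [NormedSpace ℝ G] {n : ℕ}
    (ι : ContinuousMultilinearMap ℝ (fun _ : Fin (n + 1) => E) G)
    (k : ℝ → ℝ → ℝ) (x : ℝ → E) (σ : ℝ) (S : Set (Fin (n + 1) → ℝ)) : G :=
  ∫ r in S,
    (k σ (r (Fin.last n)) * ∏ j : Fin n, k (r j.succ) (r j.castSucc)) •
      ι (fun i => deriv x (r i))

namespace Stmt4Aux

lemma ms_sm {m : ℕ} : MeasurableSet {r : Fin m → ℝ | StrictMono r} := by
  have h : {r : Fin m → ℝ | StrictMono r}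
      = ⋂ (p : Fin m × Fin m) (_ : p.1 < p.2), {r : Fin m → ℝ | r p.1 < r p.2} := by
    ext r
    simp only [Set.mem_setOf_eq, Set.mem_iInter]
    exact ⟨fun h p hp => h hp, fun h a b hab => h (a, b) hab⟩
  rw [h]
  exact MeasurableSet.iInter fun p => MeasurableSet.iInter fun _ =>
    measurableSet_lt (measurable_pi_apply _) (measurable_pi_apply _)

lemma ms_imp {m : ℕ} (p : Prop) [Decidable p] (j : Fin m) (S : Set ℝ)
    (hS : MeasurableSet S) : MeasurableSet {r : Fin m → ℝ | p → r j ∈ S} := by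
  by_cases hp : p
  · have h : {r : Fin m → ℝ | p → r j ∈ S} = (fun r : Fin m → ℝ => r j) ⁻¹' S := by
      ext r; simp [hp]
    rw [h]; exact (measurable_pi_apply j) hS
  · have h : {r : Fin m → ℝ | p → r j ∈ S} = Set.univ := by ext r; simp [hp]
    rw [h]; exact MeasurableSet.univ

lemma ms_simplex {n : ℕ} (a b : ℝ) : MeasurableSet (simplexSet n a b) := by
  have h : simplexSet n a b = {r : Fin (n+1) → ℝ | StrictMono r} ∩
      ⋂ i : Fin (n + 1), (fun r : Fin (n+1) → ℝ => r i) ⁻¹' Set.Ioo a b := by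
    ext r
    simp only [simplexSet, Set.mem_setOf_eq, Set.mem_inter_iff, Set.mem_iInter, Set.mem_preimage]
  rw [h]
  exact ms_sm.inter (MeasurableSet.iInter fun i => (measurable_pi_apply i) measurableSet_Ioo)

lemma ms_split {n : ℕ} (i : ℕ) (s u t : ℝ) : MeasurableSet (splitRegion n i s u t) := by
  classical
  have h : splitRegion n i s u t = {r : Fin (n+1) → ℝ | StrictMono r} ∩
      ⋂ j : Fin (n + 1),
        ({r : Fin (n+1) → ℝ | (j : ℕ) < i → r j ∈ Set.Ioo s u} ∩
          {r : Fin (n+1) → ℝ | i ≤ (j : ℕ) → r j ∈ Set.Ioo u t}) := by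
    ext r
    simp only [splitRegion, Set.mem_setOf_eq, Set.mem_inter_iff, Set.mem_iInter]
  rw [h]
  exact ms_sm.inter (MeasurableSet.iInter fun j =>
    (ms_imp _ j _ measurableSet_Ioo).inter (ms_imp _ j _ measurableSet_Ioo))

end Stmt4Aux

theorem statement4 {E G : Type*} [NormedAddCommGroup E] [NormedSpace ℝ E] [CompleteSpace E]
    [NormedAddCommGroup G] [NormedSpace ℝ G] [CompleteSpace G]
    (T γ ck : ℝ) (hT : 0 < T) (hγ0 : 0 < γ) (hγ1 : γ < 1) (hck : 0 ≤ ck)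
    (k : ℝ → ℝ → ℝ) (hkm : Measurable (Function.uncurry k))
    (hk : ∀ u v : ℝ, 0 ≤ u → u < v → v ≤ T → |k v u| ≤ ck * (v - u) ^ (-γ))
    (q : ℝ → E) (hq : ContDiff ℝ 1 q)
    (n : ℕ)
    (ι : ContinuousMultilinearMap ℝ (fun _ : Fin (n + 1) => E) G)
    (hι : ∀ v, ‖ι v‖ ≤ ∏ i, ‖v i‖)
    (s u t τ : ℝ) (hs : 0 ≤ s) (hsu : s ≤ u) (hut : u ≤ t) (htτ : t ≤ τ) (hτT : τ ≤ T) :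
    volterraIterOn ι k q τ (simplexSet n s t) =
      ∑ i ∈ Finset.range (n + 2), volterraIterOn ι k q τ (splitRegion n i s u t) := by
  classical
  open Stmt4Aux Set in
  -- the integrand
  set F : (Fin (n+1) → ℝ) → G := fun r =>
    (k τ (r (Fin.last n)) * ∏ j : Fin n, k (r j.succ) (r j.castSucc)) •
      ι (fun i => deriv q (r i)) with hFdef
  -- measurability of the integrand
  have hderiv_cont : Continuous (deriv q) := hq.continuous_deriv le_rfl
  have hkc : ∀ (f g : (Fin (n+1) → ℝ) → ℝ), Measurable f → Measurable g →
      Measurable (fun r => k (f r) (g r)) := fun f g hf hg => hkm.comp (hf.prodMk hg)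
  have hscal_meas : Measurable (fun r : Fin (n+1) → ℝ =>
      k τ (r (Fin.last n)) * ∏ j : Fin n, k (r j.succ) (r j.castSucc)) := by
    refine (hkc _ _ measurable_const (measurable_pi_apply _)).mul ?_
    exact Finset.measurable_prod _ fun j _ =>
      hkc _ _ (measurable_pi_apply _) (measurable_pi_apply _)
  have hvec_cont : Continuous (fun r : Fin (n+1) → ℝ => ι (fun i => deriv q (r i))) :=
    ι.cont.comp (continuous_pi fun i => hderiv_cont.comp (continuous_apply i))
  have hFsm : StronglyMeasurable F :=
    hscal_meas.stronglyMeasurable.smul hvec_cont.stronglyMeasurable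
  -- a bound on the derivative
  obtain ⟨M, hM⟩ : ∃ M, ∀ x ∈ Set.Icc (0:ℝ) T, ‖deriv q x‖ ≤ M :=
    isCompact_Icc.exists_bound_of_continuousOn hderiv_cont.continuousOn
  have hM0 : 0 ≤ M := le_trans (norm_nonneg _) (hM 0 ⟨le_rfl, hT.le⟩)
  -- the 1-d singular kernel profile
  set ψ : ℝ → ℝ := Set.indicator (Set.Ioc 0 T) (fun x => x ^ (-γ)) with hψdef
  have hψ_nonneg : ∀ x, 0 ≤ ψ x := fun x =>
    Set.indicator_nonneg (fun y hy => Real.rpow_nonneg hy.1.le _) x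
  have hψ_int : Integrable ψ := by
    have h1 : IntegrableOn (fun x : ℝ => x ^ (-γ)) (Set.Ioc 0 T) := by
      have h := intervalIntegral.intervalIntegrable_rpow' (a := 0) (b := T) (r := -γ)
        (by linarith)
      rwa [intervalIntegrable_iff_integrableOn_Ioc_of_le hT.le] at h
    exact (integrable_indicator_iff measurableSet_Ioc).2 h1
  -- the linear change of variables
  set L : (Fin (n+1) → ℝ) →ₗ[ℝ] (Fin (n+1) → ℝ) :=
    LinearMap.pi (fun j => (if j = Fin.last n then (0 : (Fin (n+1) → ℝ) →ₗ[ℝ] ℝ)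
      else LinearMap.proj (j+1)) - LinearMap.proj j) with hLdef
  have hLapp : ∀ (r : Fin (n+1) → ℝ) (j : Fin (n+1)),
      L r j = (if j = Fin.last n then 0 else r (j+1)) - r j := by
    intro r j
    simp only [hLdef, LinearMap.pi_apply, LinearMap.sub_apply, LinearMap.proj_apply]
    by_cases h : j = Fin.last n <;> simp [h]
  have hsucc : ∀ i : Fin (n+1), i ≠ Fin.last n → ((i + 1 : Fin (n+1)) : ℕ) = (i : ℕ) + 1 := by
    intro i hi
    exact Fin.val_add_one_of_lt (lt_of_le_of_ne (Fin.le_last i) hi)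
  have hmat : ∀ i j : Fin (n+1), LinearMap.toMatrix' L i j =
      (if i = Fin.last n then 0 else if i + 1 = j then 1 else 0) - (if i = j then 1 else 0) := by
    intro i j
    rw [LinearMap.toMatrix'_apply, hLapp]
    simp only [Pi.single_apply]
  have hdiag : ∀ i : Fin (n+1), LinearMap.toMatrix' L i i = -1 := by
    intro i
    rw [hmat, if_pos rfl]
    by_cases h : i = Fin.last n
    · rw [if_pos h]; ring
    · rw [if_neg h, if_neg ?_]
      · ring
      · intro hc
        have h1 := hsucc i h
        rw [hc] at h1; omega
  have htri : (LinearMap.toMatrix' L).BlockTriangular id := by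
    intro i j hji
    have hij : ¬ i = j := fun hc => absurd (hc ▸ hji) (lt_irrefl _)
    rw [hmat, if_neg hij, sub_zero]
    by_cases h : i = Fin.last n
    · rw [if_pos h]
    · rw [if_neg h, if_neg ?_]
      intro hc
      have h1 := hsucc i h
      rw [hc] at h1
      have h2 : (j:ℕ) < (i:ℕ) := hji
      omega
  have hdet : LinearMap.det L = (-1 : ℝ) ^ (n + 1) := by
    rw [← LinearMap.det_toMatrix', Matrix.det_of_upperTriangular htri]
    simp [hdiag]
  have hdet_ne : LinearMap.det L ≠ 0 := by
    rw [hdet]; exact pow_ne_zero _ (by norm_num)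
  have habs : |(LinearMap.det L)⁻¹| = 1 := by
    rw [hdet, abs_inv, abs_pow, abs_neg, abs_one, one_pow, inv_one]
  have hmap : Measure.map L volume = volume := by
    rw [Real.map_linearMap_volume_pi_eq_smul_volume_pi hdet_ne, habs, ENNReal.ofReal_one,
      one_smul]
  -- the affine shift
  set c : Fin (n+1) → ℝ := fun j => if j = Fin.last n then τ else 0 with hcdef
  set A : (Fin (n+1) → ℝ) → (Fin (n+1) → ℝ) := fun r => L r + c with hAdef
  have hA_last : ∀ r : Fin (n+1) → ℝ, A r (Fin.last n) = τ - r (Fin.last n) := by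
    intro r
    simp only [hAdef, Pi.add_apply, hLapp, hcdef, eq_self_iff_true, if_true]
    ring
  have hA_cast : ∀ (r : Fin (n+1) → ℝ) (j : Fin n),
      A r j.castSucc = r j.succ - r j.castSucc := by
    intro r j
    have hne : j.castSucc ≠ Fin.last n := (Fin.castSucc_lt_last j).ne
    have hstep : (j.castSucc + 1 : Fin (n+1)) = j.succ := by
      apply Fin.ext
      rw [hsucc _ hne]
      simp
    simp only [hAdef, Pi.add_apply, hLapp, hcdef, if_neg hne, hstep]
    ring
  -- the dominating function
  set h₀ : (Fin (n+1) → ℝ) → ℝ := fun r =>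
    (ck ^ (n+1) * M ^ (n+1)) * ∏ j : Fin (n+1), ψ (A r j) with hh₀def
  have hψ_meas : Measurable ψ :=
    (measurable_id.pow measurable_const).indicator measurableSet_Ioc
  have hg_int : Integrable (fun y : Fin (n+1) → ℝ => ∏ j, ψ (y j)) :=
    Integrable.fintype_prod (f := fun _ : Fin (n+1) => ψ) (fun _ => hψ_int)
  have hgA_int : Integrable (fun r : Fin (n+1) → ℝ => ∏ j, ψ (A r j)) := by
    have hL_meas : Measurable L := (LinearMap.continuous_on_pi L).measurable
    have h1 : Integrable (fun y : Fin (n+1) → ℝ => ∏ j, ψ ((y + c) j)) :=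
      hg_int.comp_add_right c
    have h2 : Integrable (fun y : Fin (n+1) → ℝ => ∏ j, ψ ((y + c) j)) (Measure.map L volume) :=
      by rwa [hmap]
    have h3 := h2.comp_measurable hL_meas
    simpa [Function.comp_def, hAdef] using h3
  have hdom_int : Integrable h₀ := by
    simpa only [hh₀def] using hgA_int.const_mul (ck ^ (n+1) * M ^ (n+1))
  -- the pointwise bound on the simplex
  have hFbound : ∀ r ∈ simplexSet n s t, ‖F r‖ ≤ h₀ r := by
    rintro r ⟨hmono, hr⟩
    have hr0 : ∀ i, 0 ≤ r i := fun i => le_trans hs (le_of_lt (hr i).1)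
    have hrT : ∀ i, r i ≤ T := fun i => le_trans (hr i).2.le (le_trans htτ hτT)
    have hgap_mem : ∀ j : Fin n, r j.succ - r j.castSucc ∈ Set.Ioc (0:ℝ) T := by
      intro j
      constructor
      · have := hmono (Fin.castSucc_lt_succ : j.castSucc < j.succ)
        linarith
      · have h1 := hr0 j.castSucc
        have h2 := hrT j.succ
        linarith
    have hlast_mem : τ - r (Fin.last n) ∈ Set.Ioc (0:ℝ) T := by
      constructor
      · have := (hr (Fin.last n)).2
        linarith
      · have := hr0 (Fin.last n)
        linarith
    have hψ_cast : ∀ j : Fin n, ψ (A r j.castSucc) = (r j.succ - r j.castSucc) ^ (-γ) := by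
      intro j
      rw [hA_cast]
      exact Set.indicator_of_mem (hgap_mem j) _
    have hψ_last : ψ (A r (Fin.last n)) = (τ - r (Fin.last n)) ^ (-γ) := by
      rw [hA_last]
      exact Set.indicator_of_mem hlast_mem _
    have hk_cast : ∀ j : Fin n, |k (r j.succ) (r j.castSucc)| ≤ ck * ψ (A r j.castSucc) := by
      intro j
      rw [hψ_cast j]
      exact hk _ _ (hr0 _) (hmono (Fin.castSucc_lt_succ : j.castSucc < j.succ)) (hrT _)
    have hk_last : |k τ (r (Fin.last n))| ≤ ck * ψ (A r (Fin.last n)) := by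
      rw [hψ_last]
      exact hk _ _ (hr0 _) (by have := (hr (Fin.last n)).2; linarith) hτT
    -- bound on the scalar factor
    have hscal : |k τ (r (Fin.last n)) * ∏ j : Fin n, k (r j.succ) (r j.castSucc)|
        ≤ ∏ j : Fin (n+1), (ck * ψ (A r j)) := by
      rw [Fin.prod_univ_castSucc (f := fun j : Fin (n+1) => ck * ψ (A r j)), abs_mul, mul_comm]
      refine mul_le_mul ?_ hk_last (abs_nonneg _) ?_
      · rw [Finset.abs_prod]
        exact Finset.prod_le_prod (fun j _ => abs_nonneg _) (fun j _ => hk_cast j)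
      · exact Finset.prod_nonneg fun j _ => mul_nonneg hck (hψ_nonneg _)
    -- bound on the multilinear factor
    have hvecb : ‖ι (fun i => deriv q (r i))‖ ≤ M ^ (n+1) := by
      refine le_trans (hι _) ?_
      calc ∏ i : Fin (n+1), ‖deriv q (r i)‖ ≤ ∏ _i : Fin (n+1), M :=
            Finset.prod_le_prod (fun i _ => norm_nonneg _)
              (fun i _ => hM _ ⟨hr0 i, hrT i⟩)
        _ = M ^ (n+1) := by simp
    have key : ‖F r‖ ≤ (∏ j : Fin (n+1), (ck * ψ (A r j))) * M ^ (n+1) := by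
      rw [hFdef]
      simp only [norm_smul, Real.norm_eq_abs]
      exact mul_le_mul hscal hvecb (norm_nonneg _)
        (Finset.prod_nonneg fun j _ => mul_nonneg hck (hψ_nonneg _))
    calc ‖F r‖ ≤ (∏ j : Fin (n+1), (ck * ψ (A r j))) * M ^ (n+1) := key
      _ = h₀ r := by
          rw [hh₀def, Finset.prod_mul_distrib, Finset.prod_const]
          simp only [Finset.card_univ, Fintype.card_fin]
          ring
  -- integrability on the simplex
  have hFint : IntegrableOn F (simplexSet n s t) := by
    refine Integrable.mono' hdom_int.integrableOn hFsm.aestronglyMeasurable.restrict ?_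
    rw [ae_restrict_iff' (ms_simplex s t)]
    exact ae_of_all _ hFbound
  -- the split regions are contained in the simplex
  have hsub : ∀ i : ℕ, splitRegion n i s u t ⊆ simplexSet n s t := by
    rintro i r ⟨hmono, h2⟩
    refine ⟨hmono, fun j => ?_⟩
    rcases lt_or_ge (j : ℕ) i with h | h
    · exact ⟨((h2 j).1 h).1, lt_of_lt_of_le ((h2 j).1 h).2 hut⟩
    · exact ⟨lt_of_le_of_lt hsu ((h2 j).2 h).1, ((h2 j).2 h).2⟩
  -- the simplex minus the union of split regions is contained in the union of hyperplanes
  set U : Set (Fin (n+1) → ℝ) := ⋃ i ∈ Finset.range (n + 2), splitRegion n i s u t with hUdef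
  have hUsub : U ⊆ simplexSet n s t := Set.iUnion₂_subset fun i _ => hsub i
  have hdiff : simplexSet n s t \ U ⊆ ⋃ j : Fin (n+1), {r : Fin (n+1) → ℝ | r j = u} := by
    rintro r ⟨⟨hmono, hr⟩, hnot⟩
    by_contra hcon
    simp only [Set.mem_iUnion, Set.mem_setOf_eq, not_exists] at hcon
    apply hnot
    by_cases hall : ∀ j, r j < u
    · refine Set.mem_biUnion (Finset.mem_range.2 (by omega : n + 1 < n + 2)) ?_
      refine ⟨hmono, fun j => ⟨fun _ => ⟨(hr j).1, hall j⟩, fun h => ?_⟩⟩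
      exact absurd h (not_le_of_gt j.isLt)
    · push_neg at hall
      have hSne : (Finset.univ.filter (fun j : Fin (n+1) => u < r j)).Nonempty := by
        obtain ⟨j₀', hj₀'⟩ := hall
        exact ⟨j₀', Finset.mem_filter.2 ⟨Finset.mem_univ _,
          lt_of_le_of_ne hj₀' (Ne.symm (hcon j₀'))⟩⟩
      set j₀ := (Finset.univ.filter (fun j : Fin (n+1) => u < r j)).min' hSne with hj₀def
      have hj₀mem : u < r j₀ :=
        (Finset.mem_filter.1 ((Finset.univ.filter _).min'_mem hSne)).2
      refine Set.mem_biUnion (Finset.mem_range.2 (by omega : (j₀ : ℕ) < n + 2)) ?_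
      refine ⟨hmono, fun j => ⟨fun h => ?_, fun h => ?_⟩⟩
      · -- j < j₀, so r j < u
        have hjlt : j < j₀ := h
        have hjnot : j ∉ Finset.univ.filter (fun j : Fin (n+1) => u < r j) := by
          intro hc
          exact absurd (Finset.min'_le _ _ hc) (not_le_of_gt hjlt)
        have : ¬ u < r j := fun hc =>
          hjnot (Finset.mem_filter.2 ⟨Finset.mem_univ _, hc⟩)
        exact ⟨(hr j).1, lt_of_le_of_ne (not_lt.1 this) (hcon j)⟩
      · -- j₀ ≤ j, so u < r j
        have hjle : j₀ ≤ j := h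
        exact ⟨lt_of_lt_of_le hj₀mem (hmono.monotone hjle), (hr j).2⟩
  have hnull : volume (simplexSet n s t \ U) = 0 := by
    refine measure_mono_null hdiff ?_
    refine measure_iUnion_null fun j => ?_
    have : (volume : Measure (Fin (n+1) → ℝ)) = Measure.pi fun _ => volume := volume_pi
    rw [this]
    exact MeasureTheory.Measure.pi_hyperplane (fun _ => (volume : Measure ℝ)) j u
  have hae : simplexSet n s t =ᵐ[volume] U := by
    rw [MeasureTheory.ae_eq_set]
    constructor
    · exact hnull
    · rw [Set.diff_eq_empty.2 hUsub]
      exact measure_empty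
  -- pairwise disjointness of the split regions
  have key_disj : ∀ a b : ℕ, a < b → b < n + 2 →
      Disjoint (splitRegion n a s u t) (splitRegion n b s u t) := by
    intro a b hab hb
    rw [Set.disjoint_left]
    rintro r ⟨hm, h⟩ ⟨hm', h'⟩
    have hj : a < n + 1 := by omega
    set j : Fin (n+1) := ⟨a, hj⟩ with hjdef
    have h1 : r j ∈ Set.Ioo u t := (h j).2 (le_of_eq rfl)
    have h2 : r j ∈ Set.Ioo s u := (h' j).1 (by simpa [hjdef] using hab)
    exact absurd h1.1 (not_lt.2 h2.2.le)
  have hpair : Set.Pairwise ↑(Finset.range (n + 2))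
      (Function.onFun Disjoint fun i => splitRegion n i s u t) := by
    intro a ha b hb hne
    simp only [Finset.coe_range, Set.mem_Iio] at ha hb
    rcases lt_or_gt_of_ne hne with h | h
    · exact key_disj a b h hb
    · exact (key_disj b a h ha).symm
  -- conclusion
  show (∫ r in simplexSet n s t, F r) = ∑ i ∈ Finset.range (n + 2), ∫ r in splitRegion n i s u t, F r
  calc (∫ r in simplexSet n s t, F r) = ∫ r in U, F r := setIntegral_congr_set hae
    _ = ∑ i ∈ Finset.range (n + 2), ∫ r in splitRegion n i s u t, F r := by
        rw [hUdef]
        exact integral_biUnion_finset _ (fun i _ => ms_split i s u t) hpair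
          (fun i _ => hFint.mono_set (hsub i))
end

section
/- Let κ ∈ (0,1), β ≥ 1, and 0 ≤ s < t ≤ τ ≤ T. For n ≥ 0 let P^n denote the partition of [s,t] into 2^n intervals of equal length. Then there is a constant C, depending only on β and κ, such that Σ_{[u,v]∈P^n} min((τ−v)^{−κ}(v−u)^{β}, (τ−u)^{β−κ}) ≤ C · 2^{−n(β−1)} · min((τ−t)^{−κ}(t−s)^{β}, (τ−s)^{β−κ}). -/
/-!
STATEMENT 6: dyadic Riemann-sum estimate with a singular weight.
`mSing τ t s κ β` implements `min((τ-t)^(-κ)(t-s)^β, (τ-s)^(β-κ))` with the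
convention `0^(-c) = +∞` for `c > 0` (so that for `t = τ` only the second
entry of the minimum matters).
-/

/-- `min ((τ-t)^(-κ) * (t-s)^β) ((τ-s)^(β-κ))` with the convention
`0 ^ (negative) = +∞` at `t = τ`. -/
noncomputable def mSing (τ t s κ β : ℝ) : ℝ :=
  if t < τ then min ((τ - t) ^ (-κ) * (t - s) ^ β) ((τ - s) ^ (β - κ))
  else (τ - s) ^ (β - κ)

lemma aux_sum (κ : ℝ) (hκ0 : 0 < κ) (hκ1 : κ < 1) (N : ℕ) (hN : 1 ≤ N) :
    ∑ j ∈ Finset.range N, ((j : ℝ) + 1) ^ (-κ) ≤ (1 + 1 / (1 - κ)) * (N : ℝ) ^ (1 - κ) := by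
  have h1κ : (0:ℝ) < 1 - κ := by linarith
  obtain ⟨M, rfl⟩ : ∃ M, N = M + 1 := ⟨N - 1, (Nat.succ_pred_eq_of_pos hN).symm⟩
  rw [Finset.sum_range_succ']
  have hanti : AntitoneOn (fun x : ℝ => x ^ (-κ)) (Set.Icc (1:ℝ) (1 + M)) := by
    intro x hx y hy hxy
    exact Real.rpow_le_rpow_of_nonpos (lt_of_lt_of_le one_pos hx.1) hxy (by linarith)
  have hint := hanti.sum_le_integral
  have hI : (∫ x in (1:ℝ)..(1 + M), x ^ (-κ)) = ((1 + (M:ℝ)) ^ (1 - κ) - 1) / (1 - κ) := by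
    rw [integral_rpow (Or.inl (by linarith))]
    rw [show -κ + 1 = 1 - κ by ring, Real.one_rpow]
  have hsum1 : ∑ i ∈ Finset.range M, ((i : ℝ) + 1 + 1) ^ (-κ)
      ≤ ((1 + (M:ℝ)) ^ (1 - κ) - 1) / (1 - κ) := by
    rw [← hI]
    refine le_trans (le_of_eq ?_) hint
    refine Finset.sum_congr rfl fun i _ => ?_
    push_cast
    ring_nf
  have h01 : ((0:ℝ) + 1) ^ (-κ) = 1 := by norm_num
  have hone : (1:ℝ) ≤ ((M:ℝ) + 1) ^ (1 - κ) :=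
    Real.one_le_rpow (by push_cast; linarith [Nat.cast_nonneg (α := ℝ) M]) h1κ.le
  have hcomm : (1 + (M:ℝ)) = ((M:ℝ) + 1) := by ring
  rw [hcomm] at hsum1
  push_cast
  calc (∑ i ∈ Finset.range M, ((i : ℝ) + 1 + 1) ^ (-κ)) + ((0:ℝ) + 1) ^ (-κ)
      ≤ (((M:ℝ) + 1) ^ (1 - κ) - 1) / (1 - κ) + 1 := by rw [h01]; linarith
    _ ≤ ((M:ℝ) + 1) ^ (1 - κ) / (1 - κ) + ((M:ℝ) + 1) ^ (1 - κ) := by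
        have h2 : (((M:ℝ) + 1) ^ (1 - κ) - 1) / (1 - κ) ≤ ((M:ℝ) + 1) ^ (1 - κ) / (1 - κ) :=
          div_le_div_of_nonneg_right (by linarith) h1κ.le
        linarith
    _ = (1 + 1 / (1 - κ)) * ((M:ℝ) + 1) ^ (1 - κ) := by field_simp; ring

lemma mSing_le_right (τ t s κ β : ℝ) : mSing τ t s κ β ≤ (τ - s) ^ (β - κ) := by
  unfold mSing; split
  · exact min_le_right _ _
  · exact le_rfl

lemma mSing_le_left (τ t s κ β : ℝ) (h : t < τ) :
    mSing τ t s κ β ≤ (τ - t) ^ (-κ) * (t - s) ^ β := by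
  rw [mSing, if_pos h]; exact min_le_left _ _

lemma mSing_nonneg (τ t s κ β : ℝ) (h1 : s ≤ t) (h2 : t ≤ τ) : 0 ≤ mSing τ t s κ β := by
  rw [mSing]; split
  · exact le_min (mul_nonneg (Real.rpow_nonneg (by linarith) _)
      (Real.rpow_nonneg (by linarith) _)) (Real.rpow_nonneg (by linarith) _)
  · exact Real.rpow_nonneg (by linarith) _

set_option maxHeartbeats 2000000 in
theorem statement6 (β κ : ℝ) (hκ0 : 0 < κ) (hκ1 : κ < 1) (hβ : 1 ≤ β) :
    ∃ C : ℝ, 0 < C ∧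
      ∀ s t τ : ℝ, 0 ≤ s → s < t → t ≤ τ → ∀ n : ℕ,
        (∑ i ∈ Finset.range (2 ^ n),
            mSing τ (s + ((i : ℝ) + 1) * ((t - s) / (2 : ℝ) ^ n))
              (s + (i : ℝ) * ((t - s) / (2 : ℝ) ^ n)) κ β)
          ≤ C * (2 : ℝ) ^ (-(n : ℝ) * (β - 1)) * mSing τ t s κ β := by
  have h1κ : (0:ℝ) < 1 - κ := by linarith
  have hβκ : (0:ℝ) ≤ β - κ := by linarith
  have h2κpos : (0:ℝ) < 2 ^ κ := Real.rpow_pos_of_pos two_pos κ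
  have h2βpos : (0:ℝ) < 2 ^ β := Real.rpow_pos_of_pos two_pos β
  have h2κ1 : (1:ℝ) ≤ 2 ^ κ := Real.one_le_rpow one_le_two hκ0.le
  have h2β1 : (1:ℝ) ≤ 2 ^ β := Real.one_le_rpow one_le_two (by linarith)
  set C : ℝ := 2 ^ κ + (2 ^ β + 1 + 1 / (1 - κ)) with hC
  have hCpos : 0 < C := by
    have : (0:ℝ) < 1 / (1 - κ) := by positivity
    positivity
  have hC1 : 2 ^ κ ≤ C := by
    have : (0:ℝ) < 1 / (1 - κ) := by positivity
    simp only [hC]; linarith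
  have hC2 : 2 ^ β + 1 + 1 / (1 - κ) ≤ C := by simp only [hC]; linarith
  refine ⟨C, hCpos, ?_⟩
  intro s t τ hs hst htτ n
  have hts : (0:ℝ) < t - s := by linarith
  have hNpos : (0:ℝ) < (2:ℝ) ^ n := by positivity
  set δ : ℝ := (t - s) / (2:ℝ) ^ n with hδdef
  have hδ : 0 < δ := div_pos hts hNpos
  have hNδ : (2:ℝ) ^ n * δ = t - s := by rw [hδdef]; field_simp
  set P : ℝ := (2:ℝ) ^ (-(n:ℝ) * (β - 1)) with hP
  have hPpos : 0 < P := Real.rpow_pos_of_pos two_pos _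
  have hms0 : 0 ≤ mSing τ t s κ β := mSing_nonneg _ _ _ _ _ hst.le htτ
  set F : ℕ → ℝ := fun i => mSing τ (s + ((i:ℝ) + 1) * δ) (s + (i:ℝ) * δ) κ β with hF
  -- key power identity : 2^n * δ^β = P * (t-s)^β
  have hcast : ((2:ℝ) ^ n) = (2:ℝ) ^ ((n:ℝ)) := (Real.rpow_natCast 2 n).symm
  have hpowβ : ((2:ℝ) ^ n) ^ β = (2:ℝ) ^ ((n:ℝ) * β) := by
    rw [hcast, ← Real.rpow_mul (by norm_num)]
  have hδβ : δ ^ β = (t - s) ^ β / (2:ℝ) ^ ((n:ℝ) * β) := by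
    rw [hδdef, Real.div_rpow hts.le hNpos.le, hpowβ]
  have hkey1 : (2:ℝ) ^ n * δ ^ β = P * (t - s) ^ β := by
    rw [hδβ, hP, hcast]
    rw [div_eq_mul_inv, ← Real.rpow_neg (by norm_num : (0:ℝ) ≤ 2)]
    rw [mul_comm ((t-s)^β) _, ← mul_assoc, ← Real.rpow_add two_pos]
    ring_nf
  -- Case split
  by_cases hcase : t - s ≤ 2 * (τ - t)
  · -- Case A : τ - t ≥ (t-s)/2 > 0
    have hτt : (0:ℝ) < τ - t := by linarith
    have htτ' : t < τ := by linarith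
    have hterm : ∀ i ∈ Finset.range (2 ^ n), F i ≤ (τ - t) ^ (-κ) * δ ^ β := by
      intro i hi
      rw [Finset.mem_range] at hi
      have hi' : ((i:ℝ) + 1) ≤ (2:ℝ) ^ n := by
        have : ((i:ℝ) + 1) ≤ ((2^n : ℕ) : ℝ) := by exact_mod_cast Nat.succ_le_of_lt hi
        simpa using this
      have hv : s + ((i:ℝ) + 1) * δ ≤ t := by
        have : ((i:ℝ) + 1) * δ ≤ (2:ℝ)^n * δ := by
          exact mul_le_mul_of_nonneg_right hi' hδ.le
        linarith [hNδ]
      have hvτ : s + ((i:ℝ) + 1) * δ < τ := lt_of_le_of_lt hv htτ'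
      refine le_trans (mSing_le_left _ _ _ _ _ hvτ) ?_
      have hvu : (s + ((i:ℝ) + 1) * δ) - (s + (i:ℝ) * δ) = δ := by ring
      rw [hvu]
      refine mul_le_mul_of_nonneg_right ?_ (Real.rpow_nonneg hδ.le β)
      exact Real.rpow_le_rpow_of_nonpos hτt (by linarith) (by linarith)
    have hsum : (∑ i ∈ Finset.range (2 ^ n), F i)
        ≤ (2:ℝ) ^ n * ((τ - t) ^ (-κ) * δ ^ β) := by
      refine le_trans (Finset.sum_le_sum hterm) ?_
      rw [Finset.sum_const, Finset.card_range, nsmul_eq_mul]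
      push_cast
      exact le_refl _
    have hA1 : (τ - t) ^ (-κ) * (t - s) ^ β ≤ 2 ^ κ * mSing τ t s κ β := by
      rw [mSing, if_pos htτ']
      have h0 : 0 ≤ (τ - t) ^ (-κ) * (t - s) ^ β :=
        mul_nonneg (Real.rpow_nonneg hτt.le _) (Real.rpow_nonneg hts.le _)
      have hkeyA : (τ - t) ^ (-κ) * (t - s) ^ β ≤ 2 ^ κ * (τ - s) ^ (β - κ) := by
        have h1 : (τ - t) ^ (-κ) ≤ ((t - s) / 2) ^ (-κ) :=
          Real.rpow_le_rpow_of_nonpos (by linarith) (by linarith) (by linarith)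
        have h2 : ((t - s) / 2) ^ (-κ) = 2 ^ κ * (t - s) ^ (-κ) := by
          rw [Real.div_rpow hts.le (by norm_num : (0:ℝ) ≤ 2),
            Real.rpow_neg (by norm_num : (0:ℝ) ≤ 2) κ, div_eq_mul_inv, inv_inv]
          ring
        have h3 : (t - s) ^ (-κ) * (t - s) ^ β = (t - s) ^ (β - κ) := by
          rw [← Real.rpow_add hts]; ring_nf
        have h4 : (t - s) ^ (β - κ) ≤ (τ - s) ^ (β - κ) :=
          Real.rpow_le_rpow (by linarith) (by linarith) hβκ
        calc (τ - t) ^ (-κ) * (t - s) ^ β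
            ≤ (2 ^ κ * (t - s) ^ (-κ)) * (t - s) ^ β := by
              rw [← h2]; exact mul_le_mul_of_nonneg_right h1 (Real.rpow_nonneg hts.le _)
          _ = 2 ^ κ * (t - s) ^ (β - κ) := by rw [mul_assoc, h3]
          _ ≤ 2 ^ κ * (τ - s) ^ (β - κ) := mul_le_mul_of_nonneg_left h4 h2κpos.le
      rcases le_total ((τ - t) ^ (-κ) * (t - s) ^ β) ((τ - s) ^ (β - κ)) with h | h
      · rw [min_eq_left h]; nlinarith
      · rw [min_eq_right h]; exact hkeyA
    calc (∑ i ∈ Finset.range (2 ^ n), F i)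
        ≤ (2:ℝ) ^ n * ((τ - t) ^ (-κ) * δ ^ β) := hsum
      _ = P * ((τ - t) ^ (-κ) * (t - s) ^ β) := by
          linear_combination (τ - t) ^ (-κ) * hkey1
      _ ≤ P * (2 ^ κ * mSing τ t s κ β) := mul_le_mul_of_nonneg_left hA1 hPpos.le
      _ ≤ C * P * mSing τ t s κ β := by nlinarith [mul_nonneg hPpos.le hms0]
  · push_neg at hcase
    obtain ⟨M, hM⟩ : ∃ M, 2 ^ n = M + 1 :=
      ⟨2 ^ n - 1, (Nat.succ_pred_eq_of_pos (Nat.two_pow_pos n)).symm⟩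
    have hMcast : ((M:ℝ) + 1) = (2:ℝ) ^ n := by
      have h := congrArg (fun k : ℕ => (k : ℝ)) hM
      push_cast at h
      linarith
    have hvt : s + ((M:ℝ) + 1) * δ = t := by
      rw [hMcast]; linarith [hNδ]
    have hexp : ((M:ℝ) + 1) * δ = (M:ℝ) * δ + δ := by ring
    have hu : s + (M:ℝ) * δ = t - δ := by linarith
    have hδβκ : (0:ℝ) ≤ δ ^ (β - κ) := Real.rpow_nonneg hδ.le _
    have hFM : F M ≤ 2 ^ β * δ ^ (β - κ) := by
      show mSing τ (s + ((M:ℝ) + 1) * δ) (s + (M:ℝ) * δ) κ β ≤ _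
      rw [hvt]
      by_cases hlast : τ - t < δ
      · refine le_trans (mSing_le_right _ _ _ _ _) ?_
        have h2 : (τ - (s + (M:ℝ) * δ)) ^ (β - κ) ≤ (2 * δ) ^ (β - κ) :=
          Real.rpow_le_rpow (by linarith) (by linarith) hβκ
        have h3 : ((2:ℝ) * δ) ^ (β - κ) = 2 ^ (β - κ) * δ ^ (β - κ) :=
          Real.mul_rpow (by norm_num) hδ.le
        have h4 : (2:ℝ) ^ (β - κ) ≤ 2 ^ β :=
          Real.rpow_le_rpow_of_exponent_le one_le_two (by linarith)
        refine h2.trans ?_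
        rw [h3]
        exact mul_le_mul_of_nonneg_right h4 hδβκ
      · push_neg at hlast
        have htτ' : t < τ := by linarith
        refine le_trans (mSing_le_left _ _ _ _ _ htτ') ?_
        have hvu : t - (s + (M:ℝ) * δ) = δ := by linarith
        rw [hvu]
        have h1 : (τ - t) ^ (-κ) ≤ δ ^ (-κ) :=
          Real.rpow_le_rpow_of_nonpos hδ hlast (by linarith)
        have h2 : δ ^ (-κ) * δ ^ β = δ ^ (β - κ) := by
          rw [← Real.rpow_add hδ]; ring_nf
        calc (τ - t) ^ (-κ) * δ ^ β ≤ δ ^ (-κ) * δ ^ β :=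
              mul_le_mul_of_nonneg_right h1 (Real.rpow_nonneg hδ.le _)
          _ = δ ^ (β - κ) := h2
          _ ≤ 2 ^ β * δ ^ (β - κ) := by nlinarith
    have hFmid : ∀ j ∈ Finset.range M,
        F (M - (j + 1)) ≤ ((j:ℝ) + 1) ^ (-κ) * δ ^ (β - κ) := by
      intro j hj
      rw [Finset.mem_range] at hj
      have hj1 : j + 1 ≤ M := hj
      have hicast : ((M - (j + 1) : ℕ) : ℝ) = (M:ℝ) - (j:ℝ) - 1 := by
        rw [Nat.cast_sub hj1]; push_cast; ring
      show mSing τ (s + (((M - (j+1) : ℕ):ℝ) + 1) * δ) (s + ((M - (j+1) : ℕ):ℝ) * δ) κ β ≤ _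
      rw [hicast]
      have hjδpos : (0:ℝ) < ((j:ℝ) + 1) * δ := by positivity
      have hvi : t - (s + (((M:ℝ) - (j:ℝ) - 1) + 1) * δ) = ((j:ℝ) + 1) * δ := by
        linear_combination -hvt
      have hviτ : s + (((M:ℝ) - (j:ℝ) - 1) + 1) * δ < τ := by linarith
      refine le_trans (mSing_le_left _ _ _ _ _ hviτ) ?_
      have hvu : (s + (((M:ℝ) - (j:ℝ) - 1) + 1) * δ) - (s + ((M:ℝ) - (j:ℝ) - 1) * δ) = δ := by
        ring
      rw [hvu]
      have h1 : (τ - (s + (((M:ℝ) - (j:ℝ) - 1) + 1) * δ)) ^ (-κ) ≤ (((j:ℝ) + 1) * δ) ^ (-κ) :=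
        Real.rpow_le_rpow_of_nonpos hjδpos (by linarith) (by linarith)
      have h2 : (((j:ℝ) + 1) * δ) ^ (-κ) = ((j:ℝ) + 1) ^ (-κ) * δ ^ (-κ) :=
        Real.mul_rpow (by positivity) hδ.le
      have h3 : δ ^ (-κ) * δ ^ β = δ ^ (β - κ) := by
        rw [← Real.rpow_add hδ]; ring_nf
      calc (τ - (s + (((M:ℝ) - (j:ℝ) - 1) + 1) * δ)) ^ (-κ) * δ ^ β
          ≤ (((j:ℝ) + 1) * δ) ^ (-κ) * δ ^ β :=
            mul_le_mul_of_nonneg_right h1 (Real.rpow_nonneg hδ.le _)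
        _ = ((j:ℝ) + 1) ^ (-κ) * δ ^ (β - κ) := by rw [h2, mul_assoc, h3]
    have hreflect : (∑ i ∈ Finset.range (2 ^ n), F i)
        = F M + ∑ j ∈ Finset.range M, F (M - (j + 1)) := by
      rw [hM, ← Finset.sum_range_reflect, Finset.sum_range_succ']
      simp [Nat.add_sub_cancel, add_comm]
    have hmidsum : (∑ j ∈ Finset.range M, F (M - (j + 1)))
        ≤ (1 + 1 / (1 - κ)) * ((2:ℝ) ^ n) ^ (1 - κ) * δ ^ (β - κ) := by
      calc (∑ j ∈ Finset.range M, F (M - (j + 1)))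
          ≤ ∑ j ∈ Finset.range M, ((j:ℝ) + 1) ^ (-κ) * δ ^ (β - κ) :=
            Finset.sum_le_sum hFmid
        _ = (∑ j ∈ Finset.range M, ((j:ℝ) + 1) ^ (-κ)) * δ ^ (β - κ) := by
            rw [← Finset.sum_mul]
        _ ≤ ((1 + 1 / (1 - κ)) * ((M + 1 : ℕ) : ℝ) ^ (1 - κ)) * δ ^ (β - κ) := by
            refine mul_le_mul_of_nonneg_right ?_ hδβκ
            refine le_trans ?_ (aux_sum κ hκ0 hκ1 (M + 1) (by omega))
            refine Finset.sum_le_sum_of_subset_of_nonneg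
              (Finset.range_subset_range.2 (by omega)) ?_
            intro j _ _
            exact Real.rpow_nonneg (by positivity) _
        _ = (1 + 1 / (1 - κ)) * ((2:ℝ) ^ n) ^ (1 - κ) * δ ^ (β - κ) := by
            push_cast
            rw [hMcast]
    have hone' : (1:ℝ) ≤ ((2:ℝ) ^ n) ^ (1 - κ) :=
      Real.one_le_rpow (one_le_pow₀ one_le_two) h1κ.le
    have hQ : ((2:ℝ) ^ n) ^ (1 - κ) * δ ^ (β - κ) = P * (t - s) ^ (β - κ) := by
      rw [hδdef, Real.div_rpow hts.le hNpos.le, hcast,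
        ← Real.rpow_mul (by norm_num : (0:ℝ) ≤ 2),
        ← Real.rpow_mul (by norm_num : (0:ℝ) ≤ 2),
        div_eq_mul_inv, ← Real.rpow_neg (by norm_num : (0:ℝ) ≤ 2),
        mul_comm ((t - s) ^ (β - κ)) _, ← mul_assoc,
        ← Real.rpow_add two_pos, hP]
      ring_nf
    have hlow : (t - s) ^ (β - κ) ≤ mSing τ t s κ β := by
      rw [mSing]
      split_ifs with h
      · refine le_min ?_ (Real.rpow_le_rpow hts.le (by linarith) hβκ)
        have h1 : (t - s) ^ (-κ) ≤ (τ - t) ^ (-κ) :=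
          Real.rpow_le_rpow_of_nonpos (by linarith) (by linarith) (by linarith)
        have h3 : (t - s) ^ (-κ) * (t - s) ^ β = (t - s) ^ (β - κ) := by
          rw [← Real.rpow_add hts]; ring_nf
        calc (t - s) ^ (β - κ) = (t - s) ^ (-κ) * (t - s) ^ β := h3.symm
          _ ≤ (τ - t) ^ (-κ) * (t - s) ^ β :=
            mul_le_mul_of_nonneg_right h1 (Real.rpow_nonneg hts.le _)
      · exact Real.rpow_le_rpow hts.le (by linarith) hβκ
    have h1κinv : (0:ℝ) < 1 / (1 - κ) := by positivity
    have hP2 : 0 ≤ P * (t - s) ^ (β - κ) :=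
      mul_nonneg hPpos.le (Real.rpow_nonneg hts.le _)
    calc (∑ i ∈ Finset.range (2 ^ n), F i)
        = F M + ∑ j ∈ Finset.range M, F (M - (j + 1)) := hreflect
      _ ≤ 2 ^ β * δ ^ (β - κ) + (1 + 1 / (1 - κ)) * ((2:ℝ) ^ n) ^ (1 - κ) * δ ^ (β - κ) :=
          add_le_add hFM hmidsum
      _ ≤ (2 ^ β + 1 + 1 / (1 - κ)) * (((2:ℝ) ^ n) ^ (1 - κ) * δ ^ (β - κ)) := by
          nlinarith [mul_nonneg (Real.rpow_nonneg (by norm_num : (0:ℝ) ≤ 2) β) hδβκ]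
      _ = (2 ^ β + 1 + 1 / (1 - κ)) * (P * (t - s) ^ (β - κ)) := by rw [hQ]
      _ ≤ C * (P * mSing τ t s κ β) := by
          refine mul_le_mul hC2 ?_ hP2 hCpos.le
          exact mul_le_mul_of_nonneg_left hlow hPpos.le
      _ = C * P * mSing τ t s κ β := by ring
end

section
/- Let E be a normed space, T > 0, γ ∈ (0,1), θ > 1 and C ≥ 0. Let ψ assign to each (s,t,τ) ∈ Δ₃ an element ψ^τ_{ts} ∈ E such that ψ^τ_{ts} = ψ^τ_{tu} + ψ^τ_{us} for all 0 ≤ s ≤ u ≤ t ≤ τ ≤ T, and ‖ψ^τ_{ts}‖ ≤ C (τ−s)^{−γ}(t−s)^{θ} whenever s < τ. Then ψ^τ_{ts} = 0 for all (s,t,τ) ∈ Δ₃. -/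
/-!
STATEMENT 13: vanishing lemma for additive functionals with a singular weight.
If `ψ^τ_{ts}` is additive in the middle point and
`‖ψ^τ_{ts}‖ ≤ C (τ-s)^(-γ) (t-s)^θ` with `θ > 1` (whenever `s < τ`),
then `ψ` vanishes on the simplex `Δ₃`.
-/

theorem statement13 {E : Type*} [NormedAddCommGroup E]
    (T γ θ C : ℝ) (hT : 0 < T) (hγ0 : 0 < γ) (hγ1 : γ < 1) (hθ : 1 < θ) (hC : 0 ≤ C)
    (ψ : ℝ → ℝ → ℝ → E)
    (hadd : ∀ s u t τ : ℝ, 0 ≤ s → s ≤ u → u ≤ t → t ≤ τ → τ ≤ T →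
      ψ τ t s = ψ τ t u + ψ τ u s)
    (hbound : ∀ s t τ : ℝ, 0 ≤ s → s ≤ t → t ≤ τ → τ ≤ T → s < τ →
      ‖ψ τ t s‖ ≤ C * ((τ - s) ^ (-γ) * (t - s) ^ θ)) :
    ∀ s t τ : ℝ, 0 ≤ s → s ≤ t → t ≤ τ → τ ≤ T → ψ τ t s = 0 := by
  -- diagonal values vanish
  have hzero : ∀ s τ : ℝ, 0 ≤ s → s ≤ τ → τ ≤ T → ψ τ s s = 0 := by
    intro s τ h0 h1 h2
    have h := hadd s s s τ h0 le_rfl le_rfl h1 h2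
    exact add_eq_right.mp h.symm
  -- main case: t < τ
  have hmain : ∀ s t τ : ℝ, 0 ≤ s → s ≤ t → t < τ → τ ≤ T → ψ τ t s = 0 := by
    intro s t τ h0s hst htτ hτT
    rcases eq_or_lt_of_le hst with rfl | hst'
    · exact hzero _ _ h0s htτ.le hτT
    have hτt : 0 < τ - t := by linarith
    set K := C * (τ - t) ^ (-γ) with hK
    have hKnn : 0 ≤ K := mul_nonneg hC (Real.rpow_nonneg hτt.le _)
    have hts : 0 < t - s := by linarith
    -- partition bound
    have step : ∀ n : ℕ, 0 < n → ∀ k : ℕ, k ≤ n →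
        ‖ψ τ (s + k * ((t - s) / n)) s‖ ≤ k * (K * ((t - s) / n) ^ θ) := by
      intro n hn
      have hnR : (0:ℝ) < n := Nat.cast_pos.mpr hn
      set Δ := (t - s) / (n:ℝ) with hΔ
      have hΔpos : 0 < Δ := div_pos hts hnR
      have hnΔ : (n:ℝ) * Δ = t - s := by
        rw [hΔ]; field_simp
      have hx_le : ∀ j : ℕ, j ≤ n → s + j * Δ ≤ t := by
        intro j hj
        have h1 : (j:ℝ) * Δ ≤ n * Δ :=
          mul_le_mul_of_nonneg_right (Nat.cast_le.mpr hj) hΔpos.le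
        linarith
      intro k
      induction k with
      | zero =>
        intro _
        simp [hzero s τ h0s (le_trans hst htτ.le) hτT]
      | succ k ih =>
        intro hk
        have hk' : k ≤ n := Nat.le_of_succ_le hk
        have ihk := ih hk'
        have hxk_nonneg : 0 ≤ s + k * Δ := by
          have : (0:ℝ) ≤ (k:ℝ) * Δ := mul_nonneg (Nat.cast_nonneg _) hΔpos.le
          linarith
        have hxk_le_t : s + k * Δ ≤ t := hx_le k hk'
        have hxk1_le_t : s + (k+1:ℕ) * Δ ≤ t := hx_le (k+1) hk
        have hstep : s + (k:ℝ) * Δ ≤ s + ((k:ℕ)+1:ℕ) * Δ := by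
          push_cast
          nlinarith [hΔpos.le]
        have hle_s : s ≤ s + (k:ℝ) * Δ := by
          nlinarith [hΔpos.le, (Nat.cast_nonneg k : (0:ℝ) ≤ k)]
        have hxk_lt_τ : s + k * Δ < τ := lt_of_le_of_lt hxk_le_t htτ
        have hadd' := hadd s (s + k * Δ) (s + (k+1:ℕ) * Δ) τ h0s hle_s hstep
          (le_trans hxk1_le_t htτ.le) hτT
        have hb := hbound (s + k * Δ) (s + (k+1:ℕ) * Δ) τ hxk_nonneg hstep
          (le_trans hxk1_le_t htτ.le) hτT hxk_lt_τ
        have hdiff : s + ((k:ℕ)+1:ℕ) * Δ - (s + (k:ℝ) * Δ) = Δ := by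
          push_cast; ring
        rw [hdiff] at hb
        have hwt : (τ - (s + k * Δ)) ^ (-γ) ≤ (τ - t) ^ (-γ) :=
          Real.rpow_le_rpow_of_nonpos hτt (by linarith) (by linarith)
        have hb2 : ‖ψ τ (s + (k+1:ℕ) * Δ) (s + k * Δ)‖ ≤ K * Δ ^ θ := by
          calc ‖ψ τ (s + (k+1:ℕ) * Δ) (s + k * Δ)‖
              ≤ C * ((τ - (s + k * Δ)) ^ (-γ) * Δ ^ θ) := hb
            _ ≤ C * ((τ - t) ^ (-γ) * Δ ^ θ) := by
                have hΔθ : (0:ℝ) ≤ Δ ^ θ := Real.rpow_nonneg hΔpos.le _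
                exact mul_le_mul_of_nonneg_left
                  (mul_le_mul_of_nonneg_right hwt hΔθ) hC
            _ = K * Δ ^ θ := by rw [hK]; ring
        calc ‖ψ τ (s + (k+1:ℕ) * Δ) s‖
            = ‖ψ τ (s + (k+1:ℕ) * Δ) (s + k * Δ) + ψ τ (s + k * Δ) s‖ := by rw [hadd']
          _ ≤ ‖ψ τ (s + (k+1:ℕ) * Δ) (s + k * Δ)‖ + ‖ψ τ (s + k * Δ) s‖ := norm_add_le _ _
          _ ≤ K * Δ ^ θ + k * (K * Δ ^ θ) := add_le_add hb2 ihk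
          _ = (k+1:ℕ) * (K * Δ ^ θ) := by push_cast; ring
    -- bound by K (t-s)^θ n^(1-θ)
    have key : ∀ n : ℕ, 0 < n →
        ‖ψ τ t s‖ ≤ K * (t - s) ^ θ * (n:ℝ) ^ (1 - θ) := by
      intro n hn
      have hnR : (0:ℝ) < n := Nat.cast_pos.mpr hn
      have hend : s + (n:ℝ) * ((t - s) / n) = t := by field_simp; ring
      have hb := step n hn n le_rfl
      rw [hend] at hb
      have hrw : (n:ℝ) * (K * ((t - s) / n) ^ θ) = K * (t - s) ^ θ * (n:ℝ) ^ (1 - θ) := by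
        rw [Real.div_rpow hts.le hnR.le, Real.rpow_sub hnR, Real.rpow_one]
        field_simp
      linarith [hrw ▸ hb]
    -- take n → ∞
    have hlim : Filter.Tendsto (fun n : ℕ => K * (t - s) ^ θ * (n:ℝ) ^ (1 - θ))
        Filter.atTop (nhds 0) := by
      have h1 : Filter.Tendsto (fun x : ℝ => x ^ (-(θ - 1))) Filter.atTop (nhds 0) :=
        tendsto_rpow_neg_atTop (by linarith)
      have h2 : Filter.Tendsto (fun n : ℕ => ((n:ℝ)) ^ (1 - θ)) Filter.atTop (nhds 0) := by
        have := h1.comp tendsto_natCast_atTop_atTop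
        simpa [Function.comp_def, neg_sub] using this
      simpa using h2.const_mul (K * (t - s) ^ θ)
    have hle : ‖ψ τ t s‖ ≤ 0 := by
      refine ge_of_tendsto hlim ?_
      filter_upwards [Filter.eventually_ge_atTop 1] with n hn
      exact key n hn
    exact norm_le_zero_iff.mp hle
  -- general case
  intro s t τ h0s hst htτ hτT
  rcases lt_or_eq_of_le htτ with htτ' | rfl
  · exact hmain s t τ h0s hst htτ' hτT
  rcases eq_or_lt_of_le hst with rfl | hst'
  · exact hzero _ _ h0s le_rfl hτT
  -- t = τ, s < τ
  have hsame : ∀ u : ℝ, s ≤ u → u < t → ψ t t s = ψ t t u := by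
    intro u hsu hut
    have h := hadd s u t t h0s hsu hut.le le_rfl hτT
    rw [hmain s u t h0s hsu hut hτT, add_zero] at h
    exact h
  have hnormle : ∀ n : ℕ, 1 ≤ n → ‖ψ t t s‖ ≤ C * ((t - s) / n) ^ (θ - γ) := by
    intro n hn
    have hnR : (0:ℝ) < n := Nat.cast_pos.mpr hn
    have hts : 0 < t - s := by linarith
    have hδpos : 0 < (t - s) / n := div_pos hts hnR
    set u := t - (t - s) / n with hu
    have hsu : s ≤ u := by
      rw [hu]
      have : (t - s) / n ≤ t - s := by
        rw [div_le_iff₀ hnR]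
        nlinarith [(Nat.one_le_cast.mpr hn : (1:ℝ) ≤ n)]
      linarith
    have hut : u < t := by rw [hu]; linarith
    have h0u : 0 ≤ u := le_trans h0s hsu
    have hb := hbound u t t h0u hut.le le_rfl hτT hut
    have htu : t - u = (t - s) / n := by rw [hu]; ring
    rw [htu] at hb
    rw [hsame u hsu hut]
    calc ‖ψ t t u‖ ≤ C * (((t - s) / n) ^ (-γ) * ((t - s) / n) ^ θ) := hb
      _ = C * ((t - s) / n) ^ (θ - γ) := by
          rw [← Real.rpow_add hδpos]
          ring_nf
  have hlim : Filter.Tendsto (fun n : ℕ => C * ((t - s) / n) ^ (θ - γ))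
      Filter.atTop (nhds 0) := by
    have h1 : Filter.Tendsto (fun n : ℕ => (t - s) / (n:ℝ)) Filter.atTop (nhds 0) :=
      tendsto_const_div_atTop_nhds_zero_nat _
    have hcont : ContinuousAt (fun x : ℝ => x ^ (θ - γ)) 0 :=
      Real.continuousAt_rpow_const 0 (θ - γ) (Or.inr (by linarith))
    have h2 := (hcont.tendsto).comp h1
    rw [Real.zero_rpow (ne_of_gt (by linarith : (0:ℝ) < θ - γ))] at h2
    simpa using h2.const_mul C
  have hle : ‖ψ t t s‖ ≤ 0 := by
    refine ge_of_tendsto hlim ?_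
    filter_upwards [Filter.eventually_ge_atTop 1] with n hn
    exact hnormle n hn
  exact norm_le_zero_iff.mp hle
end
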